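/- arXiv:2411.02073 — 6 statements merged into one kernel-verified Lean document; each statement's English description precedes it below -/
import Mathlib

section
/- Let Φ be a root system in a real vector space V with coweight lattice P, simple roots Δ, fundamental coweights ω_{α∨} and fundamental weights ω_α. Let Q be a W-invariant positive quadratic form on the coroot lattice and n a positive integer. Define Φ_y^{Q,n} := {β ∈ Φ : β(y) ∈ ℤ and Q(β∨)β(y) ∈ nℤ} and Φ_x := {β ∈ Φ : β∨(x) ∈ ℤ} (for x in the weight space). If y = Σ_{α∈Δ} a_α ω_{α∨} with a_α ∈ ℤ, and x = Σ_{α∈Δ} (a_α Q(α∨)/n) ω_α, then Φ_y^{Q,n} = Φ_x. -/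
/-!
Write `S = ∑ aᵢ bᵢ Q(αᵢ∨)`, so that `β(y) = S / Q(β∨)` and `β∨(x) = S / n`. Every summand is
divisible by `Q(β∨)`, hence `β(y)` is always an integer and `Q(β∨) β(y) = S`; both sides of the
equivalence then say `n ∣ S`.
-/

namespace Int

variable {K : Type*} [Field K] [CharZero K]

theorem exists_cast_div_eq_of_dvd {n m : ℤ} (h : n ∣ m) : ∃ k : ℤ, (m : K) / n = k :=
  ⟨m / n, (cast_div_charZero h).symm⟩

theorem cast_mul_div_cancel_of_dvd {n m : ℤ} (h : n ∣ m) : (n : K) * (m / n) = m := by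
  rw [← cast_div_charZero h, ← cast_mul, Int.mul_ediv_cancel' h]

theorem exists_cast_eq_mul_iff_dvd {n m : ℤ} : (∃ k : ℤ, (m : K) = n * k) ↔ n ∣ m := by
  simp only [← cast_mul, cast_inj]
  rfl

theorem exists_cast_div_eq_iff_dvd {n m : ℤ} (hn : n ≠ 0) :
    (∃ k : ℤ, (m : K) / n = k) ↔ n ∣ m := by
  simp only [div_eq_iff (cast_ne_zero (α := K) |>.mpr hn), mul_comm _ (n : K)]
  exact exists_cast_eq_mul_iff_dvd

end Int

theorem stmt2_general {ι : Type*} [Fintype ι]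
    (Qs : ι → ℤ)                             -- Q(α_i∨) for the simple coroots
    (n : ℤ) (hn : 0 < n)
    (a : ι → ℤ)                              -- coordinates of y in fundamental coweights
    (b : ι → ℤ) (Qβ : ℤ)                     -- coroot coordinates of β and Q(β∨)
    (hkey : ∀ i, Qβ ∣ b i * Qs i) :          -- β = ∑ (bᵢ Q(αᵢ∨)/Q(β∨)) αᵢ has ℤ-coeffs
    -- β(y) := S / Qβ  and  β∨(x) := S / n  where  S := ∑ aᵢ bᵢ Q(αᵢ∨)
    ((∃ k : ℤ, ((∑ i, a i * b i * Qs i : ℤ) : ℚ) / (Qβ : ℚ) = (k : ℚ)) ∧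
      (∃ k : ℤ, (Qβ : ℚ) * (((∑ i, a i * b i * Qs i : ℤ) : ℚ) / (Qβ : ℚ)) = (n : ℚ) * k))
    ↔ (∃ k : ℤ, ((∑ i, a i * b i * Qs i : ℤ) : ℚ) / (n : ℚ) = (k : ℚ)) := by
  have hS : Qβ ∣ ∑ i, a i * b i * Qs i :=
    Finset.dvd_sum fun i _ => by simpa only [mul_assoc] using (hkey i).mul_left (a i)
  rw [Int.cast_mul_div_cancel_of_dvd hS, Int.exists_cast_eq_mul_iff_dvd,
    Int.exists_cast_div_eq_iff_dvd hn.ne']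
  exact and_iff_right (Int.exists_cast_div_eq_of_dvd hS)

theorem stmt2 {ι : Type*} [Fintype ι]
    (Qs : ι → ℤ) (hQs : ∀ i, 0 < Qs i)      -- Q(α_i∨) for the simple coroots
    (n : ℤ) (hn : 0 < n)
    (a : ι → ℤ)                              -- coordinates of y in fundamental coweights
    (b : ι → ℤ) (Qβ : ℤ) (hQβ : 0 < Qβ)      -- coroot coordinates of β and Q(β∨)
    (hkey : ∀ i, Qβ ∣ b i * Qs i) :          -- β = ∑ (bᵢ Q(αᵢ∨)/Q(β∨)) αᵢ has ℤ-coeffs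
    -- β(y) := S / Qβ  and  β∨(x) := S / n  where  S := ∑ aᵢ bᵢ Q(αᵢ∨)
    ((∃ k : ℤ, ((∑ i, a i * b i * Qs i : ℤ) : ℚ) / (Qβ : ℚ) = (k : ℚ)) ∧
      (∃ k : ℤ, (Qβ : ℚ) * (((∑ i, a i * b i * Qs i : ℤ) : ℚ) / (Qβ : ℚ)) = (n : ℚ) * k))
    ↔ (∃ k : ℤ, ((∑ i, a i * b i * Qs i : ℤ) : ℚ) / (n : ℚ) = (k : ℚ)) :=
  stmt2_general Qs n hn a b Qβ hkey
end

section
/- Let W be a finite real reflection group acting on a Euclidean space V, which is the Weyl group of a root system Φ ⊂ V. Then the sign representation w ↦ det(w) of W occurs with multiplicity one in the symmetric power S^N(V*) where N = |Φ|/2, and with multiplicity zero in S^j(V*) for all 0 ≤ j < N. -/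
/-!
For a root `α` the reflection `s_α` fixes the hyperplane `α^⊥` pointwise, so a polynomial `p`
with `s_α p = -p` vanishes on it and is divisible by the linear form `ℓ_α = BF · α`, which is
prime. Choosing one root `α` out of each pair `±α` gives a set `P` of `N = |Φ|/2` roots whose
forms are pairwise non-associated (`Φ` is reduced), so every polynomial of sign type is divisible
by `J = ∏_{α ∈ P} ℓ_α`, homogeneous of degree `N`. Hence there is none in degree `< N`, and in
degree `N` they are multiples of `J`. Conversely `s_α` permutes `Φ`, so it fixes
`∏_{β ∈ Φ} ℓ_β = ±J²` and `s_α J = ±J`; the sign `+` would force `ℓ_α² ∣ J`. Since `W` is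
generated by the `s_α` and `det s_α = -1`, `J` is of sign type.
-/

noncomputable section

namespace Stmt4

variable {ι : Type*} [Fintype ι] [DecidableEq ι]

/-- Substitution by a linear map: `substL f p` represents `p ∘ f`. -/
def substL (f : (ι → ℝ) →ₗ[ℝ] (ι → ℝ)) :
    MvPolynomial ι ℝ →ₐ[ℝ] MvPolynomial ι ℝ :=
  MvPolynomial.aeval (fun i => ∑ j, (f (Pi.single j 1) i) • MvPolynomial.X j)

/-- The action of a linear automorphism `w` on polynomials: `(w • p)(x) = p (w⁻¹ x)`. -/
def polyAct (w : (ι → ℝ) ≃ₗ[ℝ] (ι → ℝ)) :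
    MvPolynomial ι ℝ →ₐ[ℝ] MvPolynomial ι ℝ :=
  substL w.symm.toLinearMap

/-- The sign-isotypic subspace of the degree-`d` homogeneous component: homogeneous
polynomials `p` of degree `d` with `w • p = det(w) • p` for all `w ∈ W`. -/
def signSpace (W : Subgroup ((ι → ℝ) ≃ₗ[ℝ] (ι → ℝ))) (d : ℕ) :
    Submodule ℝ (MvPolynomial ι ℝ) :=
  (MvPolynomial.homogeneousSubmodule ι ℝ d) ⊓
    ⨅ w ∈ W, LinearMap.ker
      ((polyAct w).toLinearMap - (LinearMap.det (w : (ι → ℝ) ≃ₗ[ℝ] (ι → ℝ)).toLinearMap) • LinearMap.id)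

open MvPolynomial

theorem eval_aeval_eq {σ R : Type*} [CommRing R] (g : σ → MvPolynomial σ R) (x : σ → R)
    (q : MvPolynomial σ R) : eval x (aeval g q) = eval (fun i => eval x (g i)) q := by
  induction q using MvPolynomial.induction_on with
  | C a => simp
  | add p q hp hq => simp only [map_add, hp, hq]
  | mul_X p i hp => simp only [map_mul, hp, aeval_X, eval_X]

theorem X_dvd_sub_aeval_update_zero {σ R : Type*} [CommRing R] [DecidableEq σ] (i : σ)
    (q : MvPolynomial σ R) : X i ∣ q - aeval (Function.update X i 0) q := by
  induction q using MvPolynomial.induction_on with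
  | C a => simp
  | add p q hp hq => simpa only [map_add, add_sub_add_comm] using dvd_add hp hq
  | mul_X p j hp =>
    rcases eq_or_ne j i with rfl | hji
    · simp
    · simpa only [map_mul, aeval_X, Function.update_of_ne hji, ← sub_mul] using hp.mul_right _

theorem X_dvd_iff_forall_eval_eq_zero {σ R : Type*} [CommRing R] [IsDomain R] [Infinite R]
    (i : σ) (q : MvPolynomial σ R) : X i ∣ q ↔ ∀ x : σ → R, x i = 0 → eval x q = 0 := by
  classical
  refine ⟨fun hdvd x hx => by obtain ⟨r, rfl⟩ := hdvd; simp [hx], fun h => ?_⟩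
  have hvanish : aeval (Function.update (X : σ → MvPolynomial σ R) i 0) q = 0 := by
    refine MvPolynomial.funext fun x => ?_
    have hpoint : (fun j => eval x (Function.update (X : σ → MvPolynomial σ R) i 0 j))
        = Function.update x i 0 := by
      funext j
      rcases eq_or_ne j i with rfl | hji <;> simp [*]
    rw [eval_aeval_eq, hpoint, map_zero]
    exact h _ (Function.update_self ..)
  simpa only [hvanish, sub_zero] using X_dvd_sub_aeval_update_zero i q

theorem prod_dvd_of_prime_of_forall_dvd {α M : Type*} [CommMonoidWithZero M] [IsCancelMulZero M]
    {g : α → M} {s : Finset α} (hprime : ∀ a ∈ s, Prime (g a))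
    (hndvd : ∀ a ∈ s, ∀ b ∈ s, a ≠ b → ¬ g a ∣ g b) {p : M} (hdvd : ∀ a ∈ s, g a ∣ p) :
    ∏ a ∈ s, g a ∣ p := by
  classical
  induction s using Finset.induction_on generalizing p with
  | empty => simp
  | insert a s ha ih =>
    obtain ⟨q, rfl⟩ := hdvd a (s.mem_insert_self a)
    rw [Finset.prod_insert ha]
    refine mul_dvd_mul_left _ (ih (fun b hb => hprime b (s.mem_insert_of_mem hb))
      (fun b hb c hc => hndvd b (s.mem_insert_of_mem hb) c (s.mem_insert_of_mem hc)) fun b hb => ?_)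
    have hb' : b ∈ insert a s := s.mem_insert_of_mem hb
    exact ((hprime b hb').dvd_or_dvd (hdvd b hb')).resolve_left
      (hndvd b hb' a (s.mem_insert_self a) (by rintro rfl; exact ha hb))

theorem eq_zero_of_dvd_of_isHomogeneous_of_lt {σ R : Type*} [CommRing R] [IsDomain R]
    {A p : MvPolynomial σ R} {m n : ℕ} (hA : A.IsHomogeneous n) (hA0 : A ≠ 0)
    (hp : p.IsHomogeneous m) (hmn : m < n) (hdvd : A ∣ p) : p = 0 := by
  by_contra hp0
  have := totalDegree_le_of_dvd_of_isDomain hdvd hp0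
  rw [hA.totalDegree hA0, hp.totalDegree hp0] at this
  omega

theorem exists_eq_smul_of_dvd_of_isHomogeneous {σ R : Type*} [CommRing R] [IsDomain R]
    {A p : MvPolynomial σ R} {n : ℕ} (hA : A.IsHomogeneous n) (hA0 : A ≠ 0)
    (hp : p.IsHomogeneous n) (hdvd : A ∣ p) : ∃ c : R, p = c • A := by
  obtain ⟨q, rfl⟩ := hdvd
  rcases eq_or_ne q 0 with rfl | hq0
  · exact ⟨0, by simp⟩
  have hdeg := hp.totalDegree (mul_ne_zero hA0 hq0)
  rw [totalDegree_mul_of_isDomain hA0 hq0, hA.totalDegree hA0, add_eq_left,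
    totalDegree_eq_zero_iff_eq_C] at hdeg
  refine ⟨q.coeff 0, ?_⟩
  conv_lhs => rw [hdeg]
  rw [smul_eq_C_mul, mul_comm]

structure IsPositiveHalf {G : Type*} [AddGroup G] (S P : Finset G) : Prop where
  subset : P ⊆ S
  neg_mem_iff : ∀ a ∈ S, -a ∈ P ↔ a ∉ P

theorem exists_isPositiveHalf {G : Type*} [AddGroup G] (S : Finset G)
    (hneg : ∀ a ∈ S, -a ∈ S) (hne : ∀ a ∈ S, -a ≠ a) :
    ∃ P, IsPositiveHalf S P ∧ S.card = 2 * P.card := by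
  classical
  -- a well-order chooses one element of each pair `{a, -a}`
  let r : G → G → Prop := WellOrderingRel
  have hflip : ∀ a ∈ S, r (-a) a ↔ ¬ r a (-a) := fun a ha =>
    ⟨fun h h' => asymm h h', fun h => (trichotomous_of r a (-a)).resolve_left h |>.resolve_left
      (hne a ha).symm⟩
  refine ⟨S.filter fun a => r a (-a), ⟨Finset.filter_subset _ _, fun a ha => ?_⟩, ?_⟩
  · simp [ha, hneg a ha, hflip a ha]
  · have hcompl : S.filter (fun a => ¬ r a (-a)) = S.filter fun a => r (-a) a :=
      Finset.filter_congr fun a ha => (hflip a ha).symm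
    have hcard : (S.filter fun a => r (-a) a).card = (S.filter fun a => r a (-a)).card :=
      Finset.card_nbij' (fun a => -a) (fun a => -a) (fun a ha => by simp_all)
        (fun a ha => by simp_all) (fun a _ => neg_neg a) (fun a _ => neg_neg a)
    rw [← Finset.card_filter_add_card_filter_not (fun a => r a (-a)), hcompl, hcard, two_mul]

theorem apply_eq_sum_smul_single {R M : Type*} [Semiring R] [AddCommMonoid M] [Module R M]
    (f : (ι → R) →ₗ[R] M) (x : ι → R) : f x = ∑ j, x j • f (Pi.single j 1) := by
  conv_lhs => rw [← Finset.univ_sum_single x]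
  simp only [map_sum, ← map_smul, ← Pi.single_smul', smul_eq_mul, mul_one]

theorem det_preReflection {R : Type*} [CommRing R] (x : ι → R) (f : Module.Dual R (ι → R)) :
    LinearMap.det (Module.preReflection x f) = 1 - f x := by
  rw [← LinearMap.det_toMatrix (Pi.basisFun R ι)]
  have hmat : LinearMap.toMatrix (Pi.basisFun R ι) (Pi.basisFun R ι) (Module.preReflection x f)
      = 1 + Matrix.replicateCol Unit (-x) *
          Matrix.replicateRow Unit (fun j => f (Pi.single j 1)) := by
    ext i j
    simp [Module.preReflection_apply, Matrix.one_apply, Pi.single_apply, Matrix.mul_apply,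
      sub_eq_add_neg, mul_comm]
  rw [hmat, Matrix.det_one_add_replicateCol_mul_replicateRow, apply_eq_sum_smul_single f x]
  simp [dotProduct, sub_eq_add_neg, mul_comm]

theorem eval_substL (f : (ι → ℝ) →ₗ[ℝ] (ι → ℝ)) (x : ι → ℝ) (p : MvPolynomial ι ℝ) :
    eval x (substL f p) = eval (f x) p := by
  rw [substL, eval_aeval_eq]
  congr 2
  funext i
  simp [apply_eq_sum_smul_single f x, Finset.sum_apply, mul_comm]

theorem eval_polyAct (w : (ι → ℝ) ≃ₗ[ℝ] (ι → ℝ)) (x : ι → ℝ) (p : MvPolynomial ι ℝ) :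
    eval x (polyAct w p) = eval (w.symm x) p :=
  eval_substL _ _ _

theorem polyAct_mul (w₁ w₂ : (ι → ℝ) ≃ₗ[ℝ] (ι → ℝ)) (p : MvPolynomial ι ℝ) :
    polyAct (w₁ * w₂) p = polyAct w₁ (polyAct w₂ p) :=
  MvPolynomial.funext fun x => by simp only [eval_polyAct]; rfl

theorem polyAct_one (p : MvPolynomial ι ℝ) : polyAct (1 : (ι → ℝ) ≃ₗ[ℝ] (ι → ℝ)) p = p :=
  MvPolynomial.funext fun x => by simp only [eval_polyAct]; rfl

theorem polyAct_eq_det_smul_of_mem_closure {S : Set ((ι → ℝ) ≃ₗ[ℝ] (ι → ℝ))}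
    {p : MvPolynomial ι ℝ} (hS : ∀ s ∈ S, polyAct s p = (LinearEquiv.det s : ℝ) • p)
    {w : (ι → ℝ) ≃ₗ[ℝ] (ι → ℝ)} (hw : w ∈ Subgroup.closure S) :
    polyAct w p = (LinearEquiv.det w : ℝ) • p := by
  induction hw using Subgroup.closure_induction with
  | mem s hs => exact hS s hs
  | one => simp [polyAct_one]
  | mul a b _ _ ha hb => rw [polyAct_mul, hb, map_smul, ha, smul_smul, map_mul, Units.val_mul,
      mul_comm]
  | inv a _ ha =>
    have h := congrArg (polyAct a⁻¹) ha
    rw [← polyAct_mul, inv_mul_cancel, polyAct_one, map_smul] at h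
    rw [map_inv, Units.val_inv_eq_inv_val]
    conv_rhs => rw [h]
    rw [smul_smul, inv_mul_cancel₀ (Units.ne_zero _), one_smul]

def substLEquiv (u : (ι → ℝ) ≃ₗ[ℝ] (ι → ℝ)) : MvPolynomial ι ℝ ≃ₐ[ℝ] MvPolynomial ι ℝ :=
  AlgEquiv.ofAlgHom (substL u.toLinearMap) (substL u.symm.toLinearMap)
    (AlgHom.ext fun p => MvPolynomial.funext fun x => by simp [eval_substL])
    (AlgHom.ext fun p => MvPolynomial.funext fun x => by simp [eval_substL])

theorem substLEquiv_apply (u : (ι → ℝ) ≃ₗ[ℝ] (ι → ℝ)) (p : MvPolynomial ι ℝ) :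
    substLEquiv u p = substL u.toLinearMap p :=
  rfl

def linForm (F : Module.Dual ℝ (ι → ℝ)) : MvPolynomial ι ℝ :=
  ∑ i, C (F (Pi.single i 1)) * X i

theorem eval_linForm (F : Module.Dual ℝ (ι → ℝ)) (x : ι → ℝ) : eval x (linForm F) = F x := by
  simp [linForm, apply_eq_sum_smul_single F x, mul_comm]

theorem isHomogeneous_linForm (F : Module.Dual ℝ (ι → ℝ)) : (linForm F).IsHomogeneous 1 :=
  IsHomogeneous.sum _ _ _ fun i _ => by
    simpa using (isHomogeneous_X ℝ i).C_mul (F (Pi.single i 1))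

theorem linForm_neg (F : Module.Dual ℝ (ι → ℝ)) : linForm (-F) = -linForm F :=
  MvPolynomial.funext fun x => by simp [eval_linForm]

theorem polyAct_linForm (w : (ι → ℝ) ≃ₗ[ℝ] (ι → ℝ)) (F : Module.Dual ℝ (ι → ℝ)) :
    polyAct w (linForm F) = linForm (F ∘ₗ w.symm.toLinearMap) :=
  MvPolynomial.funext fun x => by simp [eval_polyAct, eval_linForm]

theorem exists_linearEquiv_apply_eq_apply (F : Module.Dual ℝ (ι → ℝ)) (hF : F ≠ 0) :
    ∃ (u : (ι → ℝ) ≃ₗ[ℝ] (ι → ℝ)) (i : ι), ∀ x, F (u x) = x i := by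
  obtain ⟨i, hi⟩ : ∃ i, F (Pi.single i 1) ≠ 0 := by
    by_contra! h
    exact hF (LinearMap.ext fun x => by simp [apply_eq_sum_smul_single F x, h])
  -- `U` changes only the `i`-th coordinate, which `F ∘ U` reads off
  set v : ι → ℝ := (F (Pi.single i 1))⁻¹ • Pi.single i 1 with hv
  have hFv : F v = 1 := by rw [hv, map_smul, smul_eq_mul, inv_mul_cancel₀ hi]
  let U : (ι → ℝ) →ₗ[ℝ] (ι → ℝ) := LinearMap.id + (LinearMap.proj i - F).smulRight v
  have hFU : ∀ x, F (U x) = x i := fun x => by simp [U, hFv]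
  have hU : Function.Injective U := by
    intro x y hxy
    have hxyi : x i = y i := by rw [← hFU x, ← hFU y, hxy]
    funext k
    rcases eq_or_ne k i with rfl | hk
    · exact hxyi
    · simpa [U, hv, hk] using congrFun hxy k
  exact ⟨LinearEquiv.ofInjectiveEndo U hU, i, hFU⟩

theorem substLEquiv_linForm {F : Module.Dual ℝ (ι → ℝ)} {u : (ι → ℝ) ≃ₗ[ℝ] (ι → ℝ)} {i : ι}
    (hu : ∀ x, F (u x) = x i) : substLEquiv u (linForm F) = X i :=
  MvPolynomial.funext fun x => by simp [substLEquiv_apply, eval_substL, eval_linForm, hu]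

theorem linForm_dvd_iff {F : Module.Dual ℝ (ι → ℝ)} (hF : F ≠ 0) {p : MvPolynomial ι ℝ} :
    linForm F ∣ p ↔ ∀ x, F x = 0 → eval x p = 0 := by
  obtain ⟨u, i, hu⟩ := exists_linearEquiv_apply_eq_apply F hF
  rw [← map_dvd_iff (substLEquiv u), substLEquiv_linForm hu, X_dvd_iff_forall_eval_eq_zero]
  simp only [substLEquiv_apply, eval_substL, LinearEquiv.coe_coe]
  refine ⟨fun h x hx => ?_, fun h x hx => h _ (by rw [hu, hx])⟩
  simpa using h (u.symm x) (by rw [← hu (u.symm x), u.apply_symm_apply, hx])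

theorem prime_linForm {F : Module.Dual ℝ (ι → ℝ)} (hF : F ≠ 0) : Prime (linForm F) := by
  obtain ⟨u, i, hu⟩ := exists_linearEquiv_apply_eq_apply F hF
  exact (MulEquiv.prime_iff (substLEquiv u)).mp (substLEquiv_linForm hu ▸ X_prime)

theorem exists_eq_smul_of_linForm_dvd {F G : Module.Dual ℝ (ι → ℝ)} (hF : F ≠ 0)
    (h : linForm F ∣ linForm G) : ∃ c : ℝ, G = c • F := by
  have hker : ⨅ _ : Unit, LinearMap.ker F ≤ LinearMap.ker G := fun x hx => by
    simpa [eval_linForm] using (linForm_dvd_iff hF).mp h x (by simpa using hx)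
  obtain ⟨c, hc⟩ :=
    Submodule.mem_span_singleton.mp (by simpa using mem_span_of_iInf_ker_le_ker hker)
  exact ⟨c, hc.symm⟩

section Reflection

variable {K M : Type*} [Field K] [AddCommGroup M] [Module K M] (BF : M →ₗ[K] M →ₗ[K] K)

def rootReflection (α : M) (hα : BF α α ≠ 0) : M ≃ₗ[K] M :=
  Module.reflection (x := α) (f := (2 / BF α α) • BF.flip α) (by simp [div_mul_cancel₀ _ hα])

variable {BF} {α : M} (hα : BF α α ≠ 0)

theorem rootReflection_apply (x : M) :
    rootReflection BF α hα x = x - (2 * BF x α / BF α α) • α := by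
  rw [rootReflection, Module.reflection_apply]
  congr 2
  simp [div_mul_eq_mul_div]

theorem rootReflection_symm : (rootReflection BF α hα).symm = rootReflection BF α hα :=
  Module.reflection_symm _

theorem rootReflection_self : rootReflection BF α hα α = -α :=
  Module.reflection_apply_self _

theorem rootReflection_rootReflection (x : M) :
    rootReflection BF α hα (rootReflection BF α hα x) = x :=
  Module.involutive_reflection _ x

theorem rootReflection_apply_of_eq_zero {x : M} (hx : BF x α = 0) :
    rootReflection BF α hα x = x := by
  simp [rootReflection_apply, hx]

theorem rootReflection_neg (hα' : BF (-α) (-α) ≠ 0) :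
    rootReflection BF (-α) hα' = rootReflection BF α hα :=
  LinearEquiv.ext fun x => by simp [rootReflection_apply, neg_div]

theorem apply_rootReflection_left (hsym : ∀ x y, BF x y = BF y x) (x y : M) :
    BF (rootReflection BF α hα x) y = BF x (rootReflection BF α hα y) := by
  simp only [rootReflection_apply, map_sub, map_smul, LinearMap.sub_apply, LinearMap.smul_apply,
    smul_eq_mul, hsym α y]
  ring

theorem rootReflection_mem {Φ : Finset M} {W : Subgroup (M ≃ₗ[K] M)}
    (hWgen : W = Subgroup.closure {w | ∃ α ∈ Φ, ∀ x : M, w x = x - (2 * BF x α / BF α α) • α})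
    (hαΦ : α ∈ Φ) : rootReflection BF α hα ∈ W :=
  hWgen ▸ Subgroup.subset_closure ⟨α, hαΦ, rootReflection_apply hα⟩

end Reflection

theorem flip_ne_zero {K M : Type*} [Field K] [AddCommGroup M] [Module K M]
    {BF : M →ₗ[K] M →ₗ[K] K} {α : M} (hα : BF α α ≠ 0) : BF.flip α ≠ 0 :=
  fun h => hα (by simpa using LinearMap.congr_fun h α)

theorem flip_injective {M : Type*} [AddCommGroup M] [Module ℝ M] {BF : M →ₗ[ℝ] M →ₗ[ℝ] ℝ}
    (hpos : ∀ x : M, x ≠ 0 → 0 < BF x x) : Function.Injective BF.flip := by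
  intro x y hxy
  by_contra hne
  have h0 : BF.flip (x - y) = 0 := by rw [map_sub, hxy, sub_self]
  have h := hpos (x - y) (sub_ne_zero.mpr hne)
  rw [← LinearMap.flip_apply, h0, LinearMap.zero_apply] at h
  exact h.false

theorem apply_self_ne_zero_of_mem {M : Type*} [AddCommGroup M] [Module ℝ M]
    {BF : M →ₗ[ℝ] M →ₗ[ℝ] ℝ} (hpos : ∀ x : M, x ≠ 0 → 0 < BF x x) {Φ : Finset M}
    (h0 : (0 : M) ∉ Φ) {α : M} (hα : α ∈ Φ) : BF α α ≠ 0 :=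
  (hpos α fun h => h0 (h ▸ hα)).ne'

section Roots

variable {BF : (ι → ℝ) →ₗ[ℝ] (ι → ℝ) →ₗ[ℝ] ℝ} {α : ι → ℝ}

theorem det_rootReflection (hα : BF α α ≠ 0) : LinearEquiv.det (rootReflection BF α hα) = -1 := by
  ext
  rw [LinearEquiv.coe_det]
  change LinearMap.det (Module.preReflection _ _) = _
  norm_num [det_preReflection, div_mul_cancel₀ _ hα]

theorem polyAct_rootReflection_linForm (hα : BF α α ≠ 0) (hsym : ∀ x y, BF x y = BF y x)
    (β : ι → ℝ) :
    polyAct (rootReflection BF α hα) (linForm (BF.flip β)) =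
      linForm (BF.flip (rootReflection BF α hα β)) := by
  rw [polyAct_linForm, rootReflection_symm]
  congr 1
  ext x
  simp [apply_rootReflection_left hα hsym]

theorem linForm_dvd_of_polyAct_rootReflection_eq_neg (hα : BF α α ≠ 0) {p : MvPolynomial ι ℝ}
    (h : polyAct (rootReflection BF α hα) p = -p) : linForm (BF.flip α) ∣ p := by
  refine (linForm_dvd_iff (flip_ne_zero hα)).mpr fun x hx => ?_
  have hx' := congrArg (eval x) h
  rw [eval_polyAct, rootReflection_symm, rootReflection_apply_of_eq_zero hα hx, map_neg] at hx'
  linarith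

theorem sq_linForm_dvd_of_polyAct_rootReflection_eq_self (hα : BF α α ≠ 0)
    (hsym : ∀ x y, BF x y = BF y x) {p : MvPolynomial ι ℝ}
    (h : polyAct (rootReflection BF α hα) p = p) (hdvd : linForm (BF.flip α) ∣ p) :
    linForm (BF.flip α) ^ 2 ∣ p := by
  obtain ⟨q, rfl⟩ := hdvd
  have hℓ : polyAct (rootReflection BF α hα) (linForm (BF.flip α)) = -linForm (BF.flip α) := by
    rw [polyAct_rootReflection_linForm hα hsym, rootReflection_self, map_neg, linForm_neg]
  have hq : polyAct (rootReflection BF α hα) q = -q := by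
    rw [map_mul, hℓ, neg_mul, ← mul_neg] at h
    exact neg_eq_iff_eq_neg.mp (mul_left_cancel₀ (prime_linForm (flip_ne_zero hα)).ne_zero h)
  rw [sq]
  exact mul_dvd_mul_left _ (linForm_dvd_of_polyAct_rootReflection_eq_neg hα hq)

end Roots

section RootProduct

variable {BF : (ι → ℝ) →ₗ[ℝ] (ι → ℝ) →ₗ[ℝ] ℝ} {Φ P : Finset (ι → ℝ)}

def rootProduct (BF : (ι → ℝ) →ₗ[ℝ] (ι → ℝ) →ₗ[ℝ] ℝ) (P : Finset (ι → ℝ)) : MvPolynomial ι ℝ :=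
  ∏ α ∈ P, linForm (BF.flip α)

theorem isHomogeneous_rootProduct (BF : (ι → ℝ) →ₗ[ℝ] (ι → ℝ) →ₗ[ℝ] ℝ) (P : Finset (ι → ℝ)) :
    (rootProduct BF P).IsHomogeneous P.card := by
  simpa [rootProduct] using
    IsHomogeneous.prod P _ (fun _ => 1) fun α _ => isHomogeneous_linForm (BF.flip α)

theorem rootProduct_ne_zero (hpos : ∀ x : ι → ℝ, x ≠ 0 → 0 < BF x x) (h0 : (0 : ι → ℝ) ∉ Φ)
    (hP : IsPositiveHalf Φ P) : rootProduct BF P ≠ 0 :=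
  Finset.prod_ne_zero_iff.mpr fun _ hα =>
    (prime_linForm (flip_ne_zero (apply_self_ne_zero_of_mem hpos h0 (hP.subset hα)))).ne_zero

theorem not_linForm_dvd_linForm (hpos : ∀ x : ι → ℝ, x ≠ 0 → 0 < BF x x)
    (h0 : (0 : ι → ℝ) ∉ Φ) (hred : ∀ α ∈ Φ, ∀ c : ℝ, c • α ∈ Φ → c = 1 ∨ c = -1)
    (hP : IsPositiveHalf Φ P) {β γ : ι → ℝ} (hβ : β ∈ P) (hγ : γ ∈ P) (hne : β ≠ γ) :
    ¬ linForm (BF.flip β) ∣ linForm (BF.flip γ) := by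
  intro hdvd
  obtain ⟨c, hc⟩ := exists_eq_smul_of_linForm_dvd
    (flip_ne_zero (apply_self_ne_zero_of_mem hpos h0 (hP.subset hβ))) hdvd
  rw [← map_smul] at hc
  obtain rfl := flip_injective hpos hc
  rcases hred β (hP.subset hβ) c (hP.subset hγ) with rfl | rfl
  · exact hne (one_smul ℝ β).symm
  · exact (hP.neg_mem_iff β (hP.subset hβ)).mp (by simpa using hγ) hβ

theorem rootProduct_dvd_of_forall_linForm_dvd (hpos : ∀ x : ι → ℝ, x ≠ 0 → 0 < BF x x)
    (h0 : (0 : ι → ℝ) ∉ Φ) (hred : ∀ α ∈ Φ, ∀ c : ℝ, c • α ∈ Φ → c = 1 ∨ c = -1)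
    (hP : IsPositiveHalf Φ P) {p : MvPolynomial ι ℝ}
    (hdvd : ∀ α ∈ P, linForm (BF.flip α) ∣ p) : rootProduct BF P ∣ p :=
  prod_dvd_of_prime_of_forall_dvd
    (fun _ hα => prime_linForm (flip_ne_zero (apply_self_ne_zero_of_mem hpos h0 (hP.subset hα))))
    (fun _ hβ _ hγ hne => not_linForm_dvd_linForm hpos h0 hred hP hβ hγ hne) hdvd

theorem not_sq_linForm_dvd_rootProduct (hpos : ∀ x : ι → ℝ, x ≠ 0 → 0 < BF x x)
    (h0 : (0 : ι → ℝ) ∉ Φ) (hred : ∀ α ∈ Φ, ∀ c : ℝ, c • α ∈ Φ → c = 1 ∨ c = -1)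
    (hP : IsPositiveHalf Φ P) {α : ι → ℝ} (hα : α ∈ P) :
    ¬ linForm (BF.flip α) ^ 2 ∣ rootProduct BF P := by
  classical
  intro h
  have hprime := prime_linForm (flip_ne_zero (apply_self_ne_zero_of_mem hpos h0 (hP.subset hα)))
  rw [rootProduct, ← Finset.mul_prod_erase P _ hα, sq, mul_dvd_mul_iff_left hprime.ne_zero] at h
  obtain ⟨β, hβ, hdvd⟩ := hprime.exists_mem_finset_dvd h
  exact not_linForm_dvd_linForm hpos h0 hred hP hα (Finset.mem_of_mem_erase hβ)
    (Finset.ne_of_mem_erase hβ).symm hdvd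

theorem prod_linForm_eq_neg_one_pow_mul_sq (hneg : ∀ α ∈ Φ, -α ∈ Φ) (hP : IsPositiveHalf Φ P) :
    ∏ α ∈ Φ, linForm (BF.flip α) = (-1) ^ P.card * rootProduct BF P ^ 2 := by
  classical
  have hpos_part : Φ.filter (· ∈ P) = P := Finset.filter_mem_eq_inter.trans
    (Finset.inter_eq_right.mpr hP.subset)
  have hneg_part : ∏ α ∈ Φ.filter (· ∉ P), linForm (BF.flip α) =
      ∏ α ∈ P, -linForm (BF.flip α) :=
    Finset.prod_nbij' (fun α => -α) (fun α => -α)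
      (fun α hα => by simp_all [hP.neg_mem_iff])
      (fun α hα => by simp [hneg α (hP.subset hα), hP.neg_mem_iff α (hP.subset hα), hα])
      (fun α _ => neg_neg α) (fun α _ => neg_neg α)
      (fun α _ => by rw [map_neg, linForm_neg, neg_neg])
  rw [← Finset.prod_filter_mul_prod_filter_not Φ (· ∈ P), hpos_part, hneg_part, Finset.prod_neg,
    rootProduct]
  ring

theorem polyAct_rootReflection_prod_linForm {α : ι → ℝ} (hα : BF α α ≠ 0)
    (hsym : ∀ x y, BF x y = BF y x) (hΦ : ∀ β ∈ Φ, rootReflection BF α hα β ∈ Φ) :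
    polyAct (rootReflection BF α hα) (∏ β ∈ Φ, linForm (BF.flip β)) =
      ∏ β ∈ Φ, linForm (BF.flip β) := by
  rw [map_prod]
  simp_rw [polyAct_rootReflection_linForm hα hsym]
  exact Finset.prod_nbij' _ _ hΦ hΦ (fun β _ => rootReflection_rootReflection hα β)
    (fun β _ => rootReflection_rootReflection hα β) fun _ _ => rfl

theorem polyAct_rootReflection_rootProduct_of_mem_positive
    (hpos : ∀ x : ι → ℝ, x ≠ 0 → 0 < BF x x) (hsym : ∀ x y, BF x y = BF y x)
    (h0 : (0 : ι → ℝ) ∉ Φ) (hneg : ∀ α ∈ Φ, -α ∈ Φ)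
    (hred : ∀ α ∈ Φ, ∀ c : ℝ, c • α ∈ Φ → c = 1 ∨ c = -1) (hP : IsPositiveHalf Φ P)
    {α : ι → ℝ} (hαP : α ∈ P) (hα : BF α α ≠ 0) (hΦ : ∀ β ∈ Φ, rootReflection BF α hα β ∈ Φ) :
    polyAct (rootReflection BF α hα) (rootProduct BF P) = -rootProduct BF P := by
  have hsq : polyAct (rootReflection BF α hα) (rootProduct BF P) ^ 2 = rootProduct BF P ^ 2 := by
    have h := polyAct_rootReflection_prod_linForm hα hsym hΦ
    rw [prod_linForm_eq_neg_one_pow_mul_sq hneg hP, map_mul, map_pow, map_pow, map_neg,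
      map_one] at h
    exact mul_left_cancel₀ (pow_ne_zero _ (neg_ne_zero.mpr one_ne_zero)) h
  refine (sq_eq_sq_iff_eq_or_eq_neg.mp hsq).resolve_left fun h => ?_
  exact not_sq_linForm_dvd_rootProduct hpos h0 hred hP hαP
    (sq_linForm_dvd_of_polyAct_rootReflection_eq_self hα hsym h (Finset.dvd_prod_of_mem _ hαP))

theorem polyAct_rootReflection_rootProduct (hpos : ∀ x : ι → ℝ, x ≠ 0 → 0 < BF x x)
    (hsym : ∀ x y, BF x y = BF y x) (h0 : (0 : ι → ℝ) ∉ Φ) (hneg : ∀ α ∈ Φ, -α ∈ Φ)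
    (hred : ∀ α ∈ Φ, ∀ c : ℝ, c • α ∈ Φ → c = 1 ∨ c = -1) (hP : IsPositiveHalf Φ P)
    {α : ι → ℝ} (hαΦ : α ∈ Φ) (hα : BF α α ≠ 0) (hΦ : ∀ β ∈ Φ, rootReflection BF α hα β ∈ Φ) :
    polyAct (rootReflection BF α hα) (rootProduct BF P) = -rootProduct BF P := by
  by_cases hαP : α ∈ P
  · exact polyAct_rootReflection_rootProduct_of_mem_positive hpos hsym h0 hneg hred hP hαP hα hΦ
  · have hα' : BF (-α) (-α) ≠ 0 := by simpa using hα
    rw [← rootReflection_neg hα hα'] at hΦ ⊢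
    exact polyAct_rootReflection_rootProduct_of_mem_positive hpos hsym h0 hneg hred hP
      ((hP.neg_mem_iff α hαΦ).mpr hαP) hα' hΦ

end RootProduct

section SignSpace

variable {BF : (ι → ℝ) →ₗ[ℝ] (ι → ℝ) →ₗ[ℝ] ℝ} {Φ P : Finset (ι → ℝ)}
  {W : Subgroup ((ι → ℝ) ≃ₗ[ℝ] (ι → ℝ))}

theorem mem_signSpace {d : ℕ} {p : MvPolynomial ι ℝ} :
    p ∈ signSpace W d ↔
      p.IsHomogeneous d ∧ ∀ w ∈ W, polyAct w p = (LinearEquiv.det w : ℝ) • p := by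
  simp [signSpace, sub_eq_zero, LinearEquiv.coe_det, mem_homogeneousSubmodule]

theorem polyAct_rootProduct_of_mem (hpos : ∀ x : ι → ℝ, x ≠ 0 → 0 < BF x x)
    (hsym : ∀ x y, BF x y = BF y x) (h0 : (0 : ι → ℝ) ∉ Φ) (hneg : ∀ α ∈ Φ, -α ∈ Φ)
    (hred : ∀ α ∈ Φ, ∀ c : ℝ, c • α ∈ Φ → c = 1 ∨ c = -1) (hP : IsPositiveHalf Φ P)
    (hWgen : W = Subgroup.closure
      {w | ∃ α ∈ Φ, ∀ x : ι → ℝ, w x = x - (2 * BF x α / BF α α) • α})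
    (hWΦ : ∀ w ∈ W, ∀ α ∈ Φ, w α ∈ Φ) {w : (ι → ℝ) ≃ₗ[ℝ] (ι → ℝ)} (hw : w ∈ W) :
    polyAct w (rootProduct BF P) = (LinearEquiv.det w : ℝ) • rootProduct BF P := by
  rw [hWgen] at hw
  refine polyAct_eq_det_smul_of_mem_closure (fun s hs => ?_) hw
  obtain ⟨α, hαΦ, hs⟩ := hs
  have hα := apply_self_ne_zero_of_mem hpos h0 hαΦ
  obtain rfl : s = rootReflection BF α hα :=
    LinearEquiv.ext fun x => (hs x).trans (rootReflection_apply hα x).symm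
  have hsW := rootReflection_mem hα hWgen hαΦ
  rw [polyAct_rootReflection_rootProduct hpos hsym h0 hneg hred hP hαΦ hα (hWΦ _ hsW),
    det_rootReflection, Units.val_neg, Units.val_one, neg_one_smul]

theorem rootProduct_mem_signSpace (hpos : ∀ x : ι → ℝ, x ≠ 0 → 0 < BF x x)
    (hsym : ∀ x y, BF x y = BF y x) (h0 : (0 : ι → ℝ) ∉ Φ) (hneg : ∀ α ∈ Φ, -α ∈ Φ)
    (hred : ∀ α ∈ Φ, ∀ c : ℝ, c • α ∈ Φ → c = 1 ∨ c = -1) (hP : IsPositiveHalf Φ P)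
    (hWgen : W = Subgroup.closure
      {w | ∃ α ∈ Φ, ∀ x : ι → ℝ, w x = x - (2 * BF x α / BF α α) • α})
    (hWΦ : ∀ w ∈ W, ∀ α ∈ Φ, w α ∈ Φ) :
    rootProduct BF P ∈ signSpace W P.card :=
  mem_signSpace.mpr ⟨isHomogeneous_rootProduct BF P,
    fun _ hw => polyAct_rootProduct_of_mem hpos hsym h0 hneg hred hP hWgen hWΦ hw⟩

theorem rootProduct_dvd_of_mem_signSpace (hpos : ∀ x : ι → ℝ, x ≠ 0 → 0 < BF x x)
    (h0 : (0 : ι → ℝ) ∉ Φ) (hred : ∀ α ∈ Φ, ∀ c : ℝ, c • α ∈ Φ → c = 1 ∨ c = -1)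
    (hP : IsPositiveHalf Φ P)
    (hWgen : W = Subgroup.closure
      {w | ∃ α ∈ Φ, ∀ x : ι → ℝ, w x = x - (2 * BF x α / BF α α) • α})
    {d : ℕ} {p : MvPolynomial ι ℝ} (hp : p ∈ signSpace W d) : rootProduct BF P ∣ p := by
  refine rootProduct_dvd_of_forall_linForm_dvd hpos h0 hred hP fun α hαP => ?_
  have hα := apply_self_ne_zero_of_mem hpos h0 (hP.subset hαP)
  refine linForm_dvd_of_polyAct_rootReflection_eq_neg hα ?_
  rw [(mem_signSpace.mp hp).2 _ (rootReflection_mem hα hWgen (hP.subset hαP)),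
    det_rootReflection, Units.val_neg, Units.val_one, neg_one_smul]

end SignSpace

theorem stmt4_general
    (Φ : Finset (ι → ℝ)) (h0 : (0 : ι → ℝ) ∉ Φ)
    (hneg : ∀ α ∈ Φ, -α ∈ Φ)
    (hred : ∀ α ∈ Φ, ∀ c : ℝ, c • α ∈ Φ → c = 1 ∨ c = -1)  -- reduced
    (BF : (ι → ℝ) →ₗ[ℝ] (ι → ℝ) →ₗ[ℝ] ℝ)
    (hsym : ∀ x y, BF x y = BF y x)
    (hpos : ∀ x : ι → ℝ, x ≠ 0 → 0 < BF x x)               -- Euclidean structure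
    (W : Subgroup ((ι → ℝ) ≃ₗ[ℝ] (ι → ℝ)))
    (hWgen : W = Subgroup.closure
      {w | ∃ α ∈ Φ, ∀ x : ι → ℝ, w x = x - (2 * BF x α / BF α α) • α})
    (hWΦ : ∀ w ∈ W, ∀ α ∈ Φ, w α ∈ Φ) :
    Module.finrank ℝ (signSpace W (Φ.card / 2)) = 1 ∧
    ∀ j < Φ.card / 2, Module.finrank ℝ (signSpace W j) = 0 := by
  obtain ⟨P, hP, hcard⟩ := exists_isPositiveHalf Φ hneg
    fun α hα h => h0 (neg_eq_self.mp h ▸ hα)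
  have hJ0 := rootProduct_ne_zero (BF := BF) hpos h0 hP
  have hJ := isHomogeneous_rootProduct BF P
  have hdvd {d : ℕ} {p : MvPolynomial ι ℝ} (hp : p ∈ signSpace W d) : rootProduct BF P ∣ p :=
    rootProduct_dvd_of_mem_signSpace hpos h0 hred hP hWgen hp
  rw [show Φ.card / 2 = P.card by omega]
  refine ⟨?_, fun j hj => ?_⟩
  · have hspan : signSpace W P.card = ℝ ∙ rootProduct BF P := by
      refine le_antisymm (fun p hp => ?_) ((Submodule.span_singleton_le_iff_mem _ _).mpr
        (rootProduct_mem_signSpace hpos hsym h0 hneg hred hP hWgen hWΦ))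
      obtain ⟨c, rfl⟩ := exists_eq_smul_of_dvd_of_isHomogeneous hJ hJ0
        (mem_signSpace.mp hp).1 (hdvd hp)
      exact Submodule.smul_mem _ c (Submodule.mem_span_singleton_self _)
    rw [hspan, finrank_span_singleton hJ0]
  · have hbot : signSpace W j = ⊥ := (Submodule.eq_bot_iff _).mpr fun p hp =>
      eq_zero_of_dvd_of_isHomogeneous_of_lt hJ hJ0 (mem_signSpace.mp hp).1 hj (hdvd hp)
    rw [hbot, finrank_bot]

theorem stmt4
    (Φ : Finset (ι → ℝ)) (h0 : (0 : ι → ℝ) ∉ Φ)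
    (hspan : Submodule.span ℝ (Φ : Set (ι → ℝ)) = ⊤)      -- V^W is trivial
    (hneg : ∀ α ∈ Φ, -α ∈ Φ)
    (hred : ∀ α ∈ Φ, ∀ c : ℝ, c • α ∈ Φ → c = 1 ∨ c = -1)  -- reduced
    (BF : (ι → ℝ) →ₗ[ℝ] (ι → ℝ) →ₗ[ℝ] ℝ)
    (hsym : ∀ x y, BF x y = BF y x)
    (hpos : ∀ x : ι → ℝ, x ≠ 0 → 0 < BF x x)               -- Euclidean structure
    (W : Subgroup ((ι → ℝ) ≃ₗ[ℝ] (ι → ℝ)))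
    (hWgen : W = Subgroup.closure
      {w | ∃ α ∈ Φ, ∀ x : ι → ℝ, w x = x - (2 * BF x α / BF α α) • α})
    (hWΦ : ∀ w ∈ W, ∀ α ∈ Φ, w α ∈ Φ) :
    Module.finrank ℝ (signSpace W (Φ.card / 2)) = 1 ∧
    ∀ j < Φ.card / 2, Module.finrank ℝ (signSpace W j) = 0 :=
  stmt4_general Φ h0 hneg hred BF hsym hpos W hWgen hWΦ

end Stmt4
end
end

section
/- Let λ = (λ₁ ≥ λ₂ ≥ ...) be a partition of 2r in which every even part occurs an even number of times (a D-partition). Let (ξ, η) be the unordered pair of partitions with |ξ| + |η| = r obtained from λ by the Carter–Lusztig symbol procedure for type D. Then: (i) if λ₁ is odd, then max(L(ξ), L(η)) = (λ₁+1)/2; (ii) if λ₁ is odd and λ₂ = λ₁, then {L(ξ), L(η)} = {(λ₁+1)/2, (λ₁−1)/2}; (iii) if λ₁ is even (so λ₂ = λ₁), then L(ξ) = L(η) = λ₁/2. Here L(μ) denotes the largest part of a partition μ. -/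
/-!
Write `λ = (λ₁ ≥ ⋯ ≥ λₙ)`. Since `|λ| = 2r` is even there are evenly many odd parts, and the
even parts come in pairs; hence `n = 2m` and no padding occurs. Read from the top,
`λ*` ends with `λ₁ + n - 1` and `λ₂ + n - 2`. A pair of equal parts occupies consecutive
positions and so contributes one even and one odd entry to `λ*`, while an unpaired part is odd;
counting with the parity of the position shows that `λ*` has exactly `m` entries of each parity.
Hence `ξ` and `η` arise from `m` strictly increasing halves by subtracting `0, …, m - 1`: the
largest part of each is half the largest entry of that parity minus `m - 1`, and
`|ξ| + |η| = (|λ*| - m) / 2 - m (m - 1) = r`. The largest entry `λ₁ + n - 1` has the parity of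
`λ₁ + 1`; the largest entry of the other parity is at most `λ₁ + n - 2`, with equality when
`λ₂ = λ₁`, which is forced when `λ₁` is even.
-/

namespace Stmt5

/-- Largest part of a partition given as a list. -/
def Lp (l : List ℕ) : ℕ := l.foldr max 0

/-- Pad a (decreasing) partition with a trailing zero to make its length even. -/
def padEven (l : List ℕ) : List ℕ := if Even l.length then l else l ++ [0]

/-- `λ*`: read the padded partition in increasing order and add `(i-1)` to the
`i`-th entry (0-indexed: add `i`). -/
def starSeq (l : List ℕ) : List ℕ :=
  List.zipWith (· + ·) l.reverse (List.range l.length)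

/-- Halves of the even entries (`2x ↦ x`), in increasing order. -/
def evenHalves (s : List ℕ) : List ℕ := (s.filter (fun x => x % 2 = 0)).map (· / 2)

/-- Halves of the odd entries (`2y+1 ↦ y`), in increasing order. -/
def oddHalves (s : List ℕ) : List ℕ := (s.filter (fun x => x % 2 = 1)).map (· / 2)

/-- Subtract the staircase `(0,1,2,…)` from an increasing sequence. -/
def unstair (s : List ℕ) : List ℕ :=
  List.zipWith (fun a i => a - i) s (List.range s.length)

/-- First member of the unordered pair `φ_D(l)` (from the even entries of `λ*`). -/
def xiD (l : List ℕ) : List ℕ := unstair (evenHalves (starSeq (padEven l)))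

/-- Second member of the unordered pair `φ_D(l)` (from the odd entries of `λ*`). -/
def etaD (l : List ℕ) : List ℕ := unstair (oddHalves (starSeq (padEven l)))

open List

lemma le_Lp_of_mem {u : List ℕ} {z : ℕ} (hz : z ∈ u) : z ≤ Lp u :=
  le_max_of_le hz le_rfl

lemma Lp_le {u : List ℕ} {a : ℕ} (h : ∀ z ∈ u, z ≤ a) : Lp u ≤ a :=
  max_le_of_forall_le u a h

lemma Lp_eq_of_mem {u : List ℕ} {a : ℕ} (ha : a ∈ u) (h : ∀ z ∈ u, z ≤ a) : Lp u = a :=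
  le_antisymm (Lp_le h) (le_Lp_of_mem ha)

lemma Lp_map_of_monotone {f : ℕ → ℕ} (hf : Monotone f) (hf0 : f 0 = 0) (u : List ℕ) :
    Lp (u.map f) = f (Lp u) := by
  induction u with
  | nil => exact hf0.symm
  | cons a u ih => exact (congrArg (max (f a)) ih).trans (hf.map_max).symm

section StrictlyIncreasing

variable {v : List ℕ}

lemma getElem_add_sub_le_getElem (hv : v.Pairwise (· < ·)) {i j : ℕ} (hij : i ≤ j)
    (hj : j < v.length) : v[i] + (j - i) ≤ v[j] := by
  induction j, hij using Nat.le_induction with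
  | base => simp
  | succ j hij ih =>
    have hlt := pairwise_iff_getElem.mp hv j (j + 1) (by omega) hj (by omega)
    have := ih (by omega)
    omega

lemma le_getElem_of_pairwise_lt (hv : v.Pairwise (· < ·)) {j : ℕ} (hj : j < v.length) :
    j ≤ v[j] := by
  have := getElem_add_sub_le_getElem hv (Nat.zero_le j) hj
  omega

@[simp] lemma length_unstair (v : List ℕ) : (unstair v).length = v.length := by
  simp [unstair]

@[simp] lemma getElem_unstair (v : List ℕ) (j : ℕ) (h : j < (unstair v).length) :
    (unstair v)[j] = v[j]'(by simpa using h) - j := by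
  simp [unstair]

lemma zipWith_add_unstair_range (hv : v.Pairwise (· < ·)) :
    zipWith (· + ·) (unstair v) (range v.length) = v := by
  refine ext_getElem (by simp) fun j h₁ h₂ => ?_
  have := le_getElem_of_pairwise_lt hv h₂
  simp only [getElem_zipWith, getElem_unstair, getElem_range]
  omega

lemma sum_unstair_add_sum_range (hv : v.Pairwise (· < ·)) :
    (unstair v).sum + (range v.length).sum = v.sum := by
  conv_rhs => rw [← zipWith_add_unstair_range hv]
  exact sum_add_sum_eq_sum_zipWith_of_length_eq _ _ (by simp)

lemma Lp_unstair_add (hv : v.Pairwise (· < ·)) (hne : v ≠ []) :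
    Lp (unstair v) + (v.length - 1) = Lp v := by
  have hn : v.length - 1 < v.length := by
    have := length_pos_iff.mpr hne
    omega
  have hgap : ∀ j (hj : j < v.length), v[j] + (v.length - 1 - j) ≤ v[v.length - 1] :=
    fun j hj => getElem_add_sub_le_getElem hv (by omega) hn
  have hLp : Lp v = v[v.length - 1] := Lp_eq_of_mem (getElem_mem hn) fun z hz => by
    obtain ⟨j, hj, rfl⟩ := getElem_of_mem hz
    have := hgap j hj
    omega
  have hLp_unstair : Lp (unstair v) = v[v.length - 1] - (v.length - 1) := by
    refine Lp_eq_of_mem ?_ fun z hz => ?_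
    · have := getElem_mem (l := unstair v) (n := v.length - 1) (by rw [length_unstair]; exact hn)
      rwa [getElem_unstair] at this
    · obtain ⟨j, hj, rfl⟩ := getElem_of_mem hz
      have := hgap j (by simpa using hj)
      simp only [getElem_unstair]
      omega
  have := le_getElem_of_pairwise_lt hv hn
  omega

end StrictlyIncreasing

lemma pairwise_lt_map_div_two_filter {s : List ℕ} (hs : s.Pairwise (· < ·)) (c : ℕ) :
    ((s.filter (· % 2 = c)).map (· / 2)).Pairwise (· < ·) := by
  rw [pairwise_map]
  refine (hs.sublist filter_sublist).imp_of_mem fun {a b} ha hb hab => ?_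
  have ha' : a % 2 = c := by simpa using (mem_filter.mp ha).2
  have hb' : b % 2 = c := by simpa using (mem_filter.mp hb).2
  omega

lemma two_mul_sum_map_div_two {u : List ℕ} {c : ℕ} (hu : ∀ z ∈ u, z % 2 = c) :
    2 * (u.map (· / 2)).sum + c * u.length = u.sum := by
  induction u with
  | nil => simp
  | cons a u ih =>
    have ha := hu a mem_cons_self
    have := ih fun z hz => hu z (mem_cons_of_mem a hz)
    simp only [map_cons, sum_cons, length_cons, Nat.mul_succ]
    omega

lemma sum_filter_mod_two (u : List ℕ) :
    (u.filter (· % 2 = 0)).sum + (u.filter (· % 2 = 1)).sum = u.sum := by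
  induction u with
  | nil => simp
  | cons a u ih =>
    rcases Nat.mod_two_eq_zero_or_one a with ha | ha <;> simp [ha] <;> omega

lemma length_filter_mod_two (u : List ℕ) :
    (u.filter (· % 2 = 0)).length + (u.filter (· % 2 = 1)).length = u.length := by
  induction u with
  | nil => simp
  | cons a u ih =>
    rcases Nat.mod_two_eq_zero_or_one a with ha | ha <;> simp [ha] <;> omega

lemma length_mod_two_eq_sum_mod_two {l : List ℕ} (hD : ∀ k, Even k → Even (l.count k)) :
    l.length % 2 = l.sum % 2 := by
  rw [← sum_toFinset_count_eq_length, Finset.sum_list_count, Finset.sum_nat_mod]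
  conv_rhs => rw [Finset.sum_nat_mod]
  refine congrArg (· % 2) (Finset.sum_congr rfl fun k _ => ?_)
  rcases Nat.mod_two_eq_zero_or_one k with hk | hk
  · have hc : l.count k % 2 = 0 := Nat.even_iff.mp (hD k (Nat.even_iff.mpr hk))
    simp [Nat.mul_mod, hk, hc]
  · simp [Nat.mul_mod, hk]

lemma countP_even_zipWith_add_range' : ∀ (a : List ℕ) (i : ℕ), a.Pairwise (· ≤ ·) →
    (∀ k, Even k → Even (a.count k)) →
    (zipWith (· + ·) a (range' i a.length)).countP (· % 2 = 0) = (a.length + i % 2) / 2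
  | [], _, _, _ => by simp
  | [x], i, _, hD => by
    have hx : x % 2 = 1 := by
      by_contra hx
      simpa using hD x (Nat.even_iff.mpr (by omega))
    simp only [length_singleton, range'_one, zipWith_cons_cons, zipWith_nil_left, countP_singleton,
      decide_eq_true_eq]
    split_ifs <;> omega
  | x :: y :: t, i, hsort, hD => by
    by_cases hxy : x = y
    · subst hxy
      have ih := countP_even_zipWith_add_range' t (i + 1 + 1) hsort.of_cons.of_cons fun k hk => by
        have := hD k hk
        rw [count_cons, count_cons] at this
        split_ifs at this
        · simpa [Nat.even_add_one] using this
        · simpa using this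
      simp only [length_cons, range'_succ, zipWith_cons_cons, countP_cons,
        decide_eq_true_eq] at ih ⊢
      split_ifs at ih ⊢ <;> omega
    · have hxt : x ∉ y :: t := fun hx => by
        have hxy' := (pairwise_cons.mp hsort).1 y mem_cons_self
        rcases mem_cons.mp hx with rfl | hx
        · exact hxy rfl
        · have := (pairwise_cons.mp hsort.of_cons).1 x hx
          omega
      have hx : x % 2 = 1 := by
        by_contra hx
        simpa [count_cons, count_eq_zero_of_not_mem hxt] using hD x (Nat.even_iff.mpr (by omega))
      have ih := countP_even_zipWith_add_range' (y :: t) (i + 1) hsort.of_cons fun k hk => by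
        have hxk : x ≠ k := by rintro rfl; exact absurd (Nat.even_iff.mp hk) (by omega)
        simpa [count_cons, hxk] using hD k hk
      simp only [length_cons, range'_succ, zipWith_cons_cons, countP_cons,
        decide_eq_true_eq] at ih ⊢
      split_ifs at ih ⊢ <;> omega

lemma two_mul_sum_range_add_self (n : ℕ) : 2 * (range n).sum + n = n * n := by
  rw [range_eq_range', sum_range', Nat.mul_zero, Nat.zero_add, Nat.mul_one,
    Nat.two_mul_div_two_of_even (Nat.even_mul_pred_self n)]
  cases n <;> simp [Nat.mul_succ]

lemma getD_one_eq_headD_of_even {l : List ℕ} (hsort : l.Pairwise (· ≥ ·))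
    (hD : ∀ k, Even k → Even (l.count k)) (heven : Even (l.headD 0)) :
    l.getD 1 0 = l.headD 0 := by
  obtain _ | ⟨x, _ | ⟨y, t⟩⟩ := l
  · rfl
  · simpa using hD x heven
  · have hx : x ∈ y :: t := by
      by_contra hx
      simpa [count_cons, count_eq_zero_of_not_mem hx] using hD x heven
    have hyx : x ≤ y := by
      rcases mem_cons.mp hx with rfl | hx
      · exact le_rfl
      · exact (pairwise_cons.mp hsort.of_cons).1 x hx
    have := (pairwise_cons.mp hsort).1 y mem_cons_self
    simp only [headD_cons, getD_cons_succ, getD_cons_zero]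
    omega

section StarSeq

variable {l : List ℕ}

@[simp] lemma length_starSeq (l : List ℕ) : (starSeq l).length = l.length := by
  simp [starSeq]

lemma getElem_starSeq (i : ℕ) (h : i < (starSeq l).length) :
    (starSeq l)[i] = l[l.length - 1 - i]'(by simp at h; omega) + i := by
  simp [starSeq, getElem_reverse]

lemma sum_starSeq (l : List ℕ) : (starSeq l).sum = l.sum + (range l.length).sum := by
  rw [starSeq, ← sum_add_sum_eq_sum_zipWith_of_length_eq _ _ (by simp), sum_reverse]

lemma getElem_le_headD (hsort : l.Pairwise (· ≥ ·)) {i : ℕ} (hi : i < l.length) :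
    l[i] ≤ l.headD 0 := by
  obtain _ | ⟨a, t⟩ := l
  · simp at hi
  · rcases i with _ | i
    · simp
    · simpa using (pairwise_cons.mp hsort).1 _ (getElem_mem (by simpa using hi))

lemma pairwise_lt_starSeq (hsort : l.Pairwise (· ≥ ·)) : (starSeq l).Pairwise (· < ·) := by
  refine pairwise_iff_getElem.mpr fun i j hi hj hij => ?_
  simp only [length_starSeq] at hi hj
  have := pairwise_iff_getElem.mp hsort (l.length - 1 - j) (l.length - 1 - i) (by omega)
    (by omega) (by omega)
  rw [getElem_starSeq, getElem_starSeq]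
  omega

lemma le_headD_add_of_mem_starSeq (hsort : l.Pairwise (· ≥ ·)) {z : ℕ} (hz : z ∈ starSeq l) :
    z ≤ l.headD 0 + (l.length - 1) := by
  obtain ⟨i, hi, rfl⟩ := getElem_of_mem hz
  simp only [length_starSeq] at hi
  have := getElem_le_headD hsort (i := l.length - 1 - i) (by omega)
  rw [getElem_starSeq]
  omega

lemma headD_add_mem_starSeq (hne : l ≠ []) : l.headD 0 + (l.length - 1) ∈ starSeq l := by
  have hn := length_pos_iff.mpr hne
  have hmem := getElem_mem (l := starSeq l) (n := l.length - 1) (by simp; omega)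
  obtain _ | ⟨a, t⟩ := l
  · contradiction
  · simpa [getElem_starSeq] using hmem

lemma getD_one_add_mem_starSeq (hl : 2 ≤ l.length) :
    l.getD 1 0 + (l.length - 2) ∈ starSeq l := by
  have hmem := getElem_mem (l := starSeq l) (n := l.length - 2) (by simp; omega)
  rw [getElem_starSeq] at hmem
  rw [getD_eq_getElem _ _ (by omega)]
  simpa [show l.length - 1 - (l.length - 2) = 1 by omega] using hmem

lemma countP_starSeq (hsort : l.Pairwise (· ≥ ·)) (hD : ∀ k, Even k → Even (l.count k)) :
    (starSeq l).countP (· % 2 = 0) = l.length / 2 := by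
  simpa [starSeq, range_eq_range'] using countP_even_zipWith_add_range' l.reverse 0
    (pairwise_reverse.mpr hsort) (by simpa [count_reverse] using hD)

end StarSeq

def symbolRow (c : ℕ) (l : List ℕ) : List ℕ :=
  unstair (((starSeq (padEven l)).filter (· % 2 = c)).map (· / 2))

lemma xiD_eq_symbolRow (l : List ℕ) : xiD l = symbolRow 0 l := rfl

lemma etaD_eq_symbolRow (l : List ℕ) : etaD l = symbolRow 1 l := rfl

section SymbolRow

variable {l : List ℕ}

lemma length_filter_starSeq (hsort : l.Pairwise (· ≥ ·)) (hD : ∀ k, Even k → Even (l.count k))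
    (hlen : Even l.length) {c : ℕ} (hc : c < 2) :
    ((starSeq l).filter (· % 2 = c)).length = l.length / 2 := by
  have h0 := countP_starSeq hsort hD
  rw [countP_eq_length_filter] at h0
  have := length_filter_mod_two (starSeq l)
  rw [length_starSeq] at this
  obtain ⟨m, hm⟩ := hlen
  interval_cases c <;> omega

lemma Lp_symbolRow_add (hsort : l.Pairwise (· ≥ ·)) (hD : ∀ k, Even k → Even (l.count k))
    (hlen : Even l.length) (hne : l ≠ []) {c : ℕ} (hc : c < 2) :
    Lp (symbolRow c l) + (l.length / 2 - 1) = Lp ((starSeq l).filter (· % 2 = c)) / 2 := by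
  have hlenc := length_filter_starSeq hsort hD hlen hc
  have hpos := length_pos_iff.mpr hne
  have hv := pairwise_lt_map_div_two_filter (pairwise_lt_starSeq hsort) c
  have hvne : ((starSeq l).filter (· % 2 = c)).map (· / 2) ≠ [] := by
    rw [← length_pos_iff, length_map, hlenc]
    obtain ⟨m, hm⟩ := hlen
    omega
  have := Lp_unstair_add hv hvne
  rw [length_map, hlenc, Lp_map_of_monotone (fun _ _ h => Nat.div_le_div_right h) rfl] at this
  rwa [symbolRow, padEven, if_pos hlen]

lemma two_mul_sum_symbolRow (hsort : l.Pairwise (· ≥ ·)) (hD : ∀ k, Even k → Even (l.count k))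
    (hlen : Even l.length) :
    2 * ((symbolRow 0 l).sum + (symbolRow 1 l).sum) = l.sum := by
  obtain ⟨m, hlm⟩ := id hlen
  have hhalf : l.length / 2 = m := by omega
  have hs := pairwise_lt_starSeq hsort
  have hE := sum_unstair_add_sum_range (pairwise_lt_map_div_two_filter hs 0)
  have hO := sum_unstair_add_sum_range (pairwise_lt_map_div_two_filter hs 1)
  have hE2 := two_mul_sum_map_div_two (u := (starSeq l).filter (· % 2 = 0)) (c := 0)
    fun z hz => by simpa using (mem_filter.mp hz).2
  have hO2 := two_mul_sum_map_div_two (u := (starSeq l).filter (· % 2 = 1)) (c := 1)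
    fun z hz => by simpa using (mem_filter.mp hz).2
  have hsplit := sum_filter_mod_two (starSeq l)
  rw [length_map, length_filter_starSeq hsort hD hlen (by norm_num), hhalf] at hE hO
  rw [length_filter_starSeq hsort hD hlen (by norm_num), hhalf] at hO2
  rw [sum_starSeq, hlm] at hsplit
  have hm := two_mul_sum_range_add_self m
  have hn := two_mul_sum_range_add_self (m + m)
  rw [symbolRow, symbolRow, padEven, if_pos hlen]
  nlinarith

lemma le_headD_add_of_mem_filter_starSeq (hsort : l.Pairwise (· ≥ ·)) (hlen : Even l.length)
    {c z : ℕ} (hc : l.headD 0 % 2 = c) (hz : z ∈ (starSeq l).filter (· % 2 = c)) :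
    z ≤ l.headD 0 + (l.length - 2) := by
  have hle := le_headD_add_of_mem_starSeq hsort (mem_filter.mp hz).1
  have hzc : z % 2 = c := by simpa using (mem_filter.mp hz).2
  obtain ⟨m, hm⟩ := hlen
  omega

lemma Lp_symbolRow_of_mod_eq (hsort : l.Pairwise (· ≥ ·)) (hD : ∀ k, Even k → Even (l.count k))
    (hlen : Even l.length) (hne : l ≠ [])
    {c : ℕ} (hc : (l.headD 0 + 1) % 2 = c) : Lp (symbolRow c l) = (l.headD 0 + 1) / 2 := by
  have hrow := Lp_symbolRow_add hsort hD hlen hne (c := c) (by omega)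
  have hpos := length_pos_iff.mpr hne
  obtain ⟨m, hm⟩ := id hlen
  have htop : Lp ((starSeq l).filter (· % 2 = c)) = l.headD 0 + (l.length - 1) :=
    Lp_eq_of_mem (mem_filter.mpr ⟨headD_add_mem_starSeq hne, decide_eq_true (by omega)⟩)
      fun z hz => le_headD_add_of_mem_starSeq hsort (mem_filter.mp hz).1
  omega

lemma Lp_symbolRow_le (hsort : l.Pairwise (· ≥ ·)) (hD : ∀ k, Even k → Even (l.count k))
    (hlen : Even l.length) (hne : l ≠ [])
    {c : ℕ} (hc : l.headD 0 % 2 = c) : Lp (symbolRow c l) ≤ l.headD 0 / 2 := by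
  have hrow := Lp_symbolRow_add hsort hD hlen hne (c := c) (by omega)
  have hpos := length_pos_iff.mpr hne
  obtain ⟨m, hm⟩ := id hlen
  have hle := Nat.div_le_div_right (c := 2)
    (Lp_le fun z hz => le_headD_add_of_mem_filter_starSeq hsort hlen hc hz)
  omega

lemma Lp_symbolRow_of_getD_eq (hsort : l.Pairwise (· ≥ ·)) (hD : ∀ k, Even k → Even (l.count k))
    (hlen : Even l.length) (hne : l ≠ [])
    (h21 : l.getD 1 0 = l.headD 0) {c : ℕ} (hc : l.headD 0 % 2 = c) :
    Lp (symbolRow c l) = l.headD 0 / 2 := by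
  have hrow := Lp_symbolRow_add hsort hD hlen hne (c := c) (by omega)
  have hpos := length_pos_iff.mpr hne
  obtain ⟨m, hm⟩ := id hlen
  have hsecond : Lp ((starSeq l).filter (· % 2 = c)) = l.headD 0 + (l.length - 2) := by
    refine Lp_eq_of_mem (mem_filter.mpr ⟨?_, decide_eq_true (by omega)⟩)
      fun z hz => le_headD_add_of_mem_filter_starSeq hsort hlen hc hz
    rw [← h21]
    exact getD_one_add_mem_starSeq (by omega)
  omega

end SymbolRow

theorem stmt5_general (r : ℕ) (hr : 0 < r) (l : List ℕ)
    (hsort : l.Pairwise (· ≥ ·))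
    (hsum : l.sum = 2 * r)
    (hD : ∀ k : ℕ, Even k → Even (l.count k)) :
    ((xiD l).sum + (etaD l).sum = r) ∧
    (Odd (l.headD 0) →
      max (Lp (xiD l)) (Lp (etaD l)) = (l.headD 0 + 1) / 2) ∧
    (Odd (l.headD 0) → l.getD 1 0 = l.headD 0 →
      ((Lp (xiD l) = (l.headD 0 + 1) / 2 ∧ Lp (etaD l) = (l.headD 0 - 1) / 2) ∨
       (Lp (etaD l) = (l.headD 0 + 1) / 2 ∧ Lp (xiD l) = (l.headD 0 - 1) / 2))) ∧
    (Even (l.headD 0) →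
      Lp (xiD l) = l.headD 0 / 2 ∧ Lp (etaD l) = l.headD 0 / 2) := by
  have hne : l ≠ [] := by
    rintro rfl
    simp at hsum
    omega
  have hlen : Even l.length := by
    have := length_mod_two_eq_sum_mod_two hD
    exact Nat.even_iff.mpr (by omega)
  rw [xiD_eq_symbolRow, etaD_eq_symbolRow]
  refine ⟨?_, fun hodd => ?_, fun hodd h21 => ?_, fun heven => ?_⟩
  · have := two_mul_sum_symbolRow hsort hD hlen
    omega
  · have hx := Nat.odd_iff.mp hodd
    have h0 := Lp_symbolRow_of_mod_eq hsort hD hlen hne (c := 0) (by omega)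
    have h1 := Lp_symbolRow_le hsort hD hlen hne hx
    omega
  · have hx := Nat.odd_iff.mp hodd
    refine Or.inl ⟨Lp_symbolRow_of_mod_eq hsort hD hlen hne (by omega), ?_⟩
    rw [Lp_symbolRow_of_getD_eq hsort hD hlen hne h21 hx]
    omega
  · have hx := Nat.even_iff.mp heven
    have h21 := getD_one_eq_headD_of_even hsort hD heven
    exact ⟨Lp_symbolRow_of_getD_eq hsort hD hlen hne h21 hx,
      (Lp_symbolRow_of_mod_eq hsort hD hlen hne (by omega)).trans (by omega)⟩

theorem stmt5 (r : ℕ) (hr : 0 < r) (l : List ℕ)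
    (hsort : l.Pairwise (· ≥ ·))
    (hpos : ∀ x ∈ l, 0 < x)
    (hsum : l.sum = 2 * r)
    (hD : ∀ k : ℕ, Even k → Even (l.count k)) :
    ((xiD l).sum + (etaD l).sum = r) ∧
    (Odd (l.headD 0) →
      max (Lp (xiD l)) (Lp (etaD l)) = (l.headD 0 + 1) / 2) ∧
    (Odd (l.headD 0) → l.getD 1 0 = l.headD 0 →
      ((Lp (xiD l) = (l.headD 0 + 1) / 2 ∧ Lp (etaD l) = (l.headD 0 - 1) / 2) ∨
       (Lp (etaD l) = (l.headD 0 + 1) / 2 ∧ Lp (xiD l) = (l.headD 0 - 1) / 2))) ∧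
    (Even (l.headD 0) →
      Lp (xiD l) = l.headD 0 / 2 ∧ Lp (etaD l) = l.headD 0 / 2) :=
  stmt5_general r hr l hsort hsum hD

end Stmt5
end

section
/- Let λ = (λ₁ ≥ λ₂ ≥ ... ≥ λ_t) be a partition of 2r+1 in which every even part occurs an even number of times (a B-partition). Let (ξ, η) = φ_B(λ) be the ordered pair of partitions with |ξ| + |η| = r attached to λ by the type-B symbol procedure. Then: (i) if L(λ) = λ₁ is odd, then L(ξ) = (λ₁ − 1)/2; (ii) if λ₁ is even, then L(η) = λ₁/2 + 1, where L denotes the largest part. -/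
/-!
Even parts come in pairs, so `|λ|` and the length of `λ` have the same parity: a type-B
partition has odd length `2m + 1` and needs no padding. Then `λ*` is
strictly increasing with last entry `λ₁ + 2m`, and exactly `m + 1` of its entries are odd (peel
off an odd part, or a pair of equal even parts, from the top). Removing a staircase from a
strictly increasing sequence leaves a weakly increasing one, so `L(ξ)` and `L(η)` are read off
from the last entry: for odd `λ₁` it is the `(m+1)`-st odd entry of `λ*`, giving
`(λ₁ + 2m)/2 - m`; for even `λ₁` it is the `m`-th even entry, giving `(λ₁ + 2m)/2 - (m - 1)`.
The size `|ξ| + |η| = r` is the bookkeeping `2(|ξ| + |η|) = Σλ* - (m + 1) - m(m+1) - m(m-1)`.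
-/

namespace Stmt6

/-- Largest part of a partition given as a list. -/
def Lp (l : List ℕ) : ℕ := l.foldr max 0

/-- Pad a (decreasing) partition with a trailing zero to make its length odd. -/
def padOdd (l : List ℕ) : List ℕ := if Even l.length then l ++ [0] else l

/-- `λ*`: read the padded partition in increasing order and add `(i-1)`. -/
def starSeq (l : List ℕ) : List ℕ :=
  List.zipWith (· + ·) l.reverse (List.range l.length)

/-- Halves of the even entries (`2x ↦ x`), in increasing order. -/
def evenHalves (s : List ℕ) : List ℕ := (s.filter (fun x => x % 2 = 0)).map (· / 2)

/-- Halves of the odd entries (`2y+1 ↦ y`), in increasing order. -/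
def oddHalves (s : List ℕ) : List ℕ := (s.filter (fun x => x % 2 = 1)).map (· / 2)

/-- Subtract the staircase `(0,1,2,…)` from an increasing sequence. -/
def unstair (s : List ℕ) : List ℕ :=
  List.zipWith (fun a i => a - i) s (List.range s.length)

/-- First member of the ordered pair `φ_B(l)`. -/
def xiB (l : List ℕ) : List ℕ := unstair (oddHalves (starSeq (padOdd l)))

/-- Second member of the ordered pair `φ_B(l)`. -/
def etaB (l : List ℕ) : List ℕ := unstair (evenHalves (starSeq (padOdd l)))

theorem Lp_append (l₁ l₂ : List ℕ) : Lp (l₁ ++ l₂) = max (Lp l₁) (Lp l₂) := by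
  induction l₁ with
  | nil => simp [Lp]
  | cons a l₁ ih => simp_all [Lp, max_assoc]

theorem Lp_singleton (a : ℕ) : Lp [a] = a := by simp [Lp]

theorem unstair_concat (u : List ℕ) (a : ℕ) : unstair (u ++ [a]) = unstair u ++ [a - u.length] := by
  simp [unstair, List.range_succ, List.zipWith_append]

theorem Lp_unstair_concat_add_length (u : List ℕ) (a : ℕ) (hu : (u ++ [a]).Pairwise (· < ·)) :
    Lp (unstair (u ++ [a])) + u.length = a := by
  induction u using List.reverseRecOn generalizing a with
  | nil => simp [unstair, Lp_singleton]
  | append_singleton v b ih =>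
    obtain ⟨hvb, -, hlt⟩ := List.pairwise_append.mp hu
    have hba : b < a := hlt b (by simp) a (by simp)
    have := ih b hvb
    rw [unstair_concat, Lp_append, Lp_singleton, List.length_append, List.length_singleton]
    omega

theorem sum_unstair_add_sum_range (u : List ℕ) (hu : u.Pairwise (· < ·)) :
    (unstair u).sum + (List.range u.length).sum = u.sum := by
  induction u using List.reverseRecOn with
  | nil => rfl
  | append_singleton v a ih =>
    have hva : v.length ≤ a := by have := Lp_unstair_concat_add_length v a hu; omega
    rw [unstair_concat, List.length_append, List.length_singleton, List.range_succ]
    simp only [List.sum_append, List.sum_singleton]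
    have := ih (List.pairwise_append.mp hu).1
    omega

theorem sum_range_mul_two_add_self (n : ℕ) : (List.range n).sum * 2 + n = n * n := by
  induction n with
  | zero => rfl
  | succ n ih =>
    rw [List.range_succ, List.sum_append, List.sum_singleton]
    linarith

theorem starSeq_cons (a : ℕ) (l : List ℕ) : starSeq (a :: l) = starSeq l ++ [a + l.length] := by
  simp [starSeq, List.range_succ, List.zipWith_append]

theorem padOdd_eq_self_of_odd_length {l : List ℕ} (hl : Odd l.length) : padOdd l = l :=
  if_neg (Nat.not_even_iff_odd.mpr hl)

theorem length_starSeq (l : List ℕ) : (starSeq l).length = l.length := by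
  simp [starSeq]

theorem sum_starSeq (l : List ℕ) : (starSeq l).sum = l.sum + (List.range l.length).sum := by
  induction l with
  | nil => rfl
  | cons a l ih =>
    rw [starSeq_cons, List.sum_append, ih, List.length_cons, List.range_succ]
    simp only [List.sum_append, List.sum_cons, List.sum_nil]
    omega

theorem lt_of_mem_starSeq {l : List ℕ} {b x : ℕ} (hb : ∀ y ∈ l, y ≤ b) (hx : x ∈ starSeq l) :
    x < b + l.length := by
  induction l with
  | nil => simp [starSeq] at hx
  | cons a l ih =>
    rw [starSeq_cons, List.mem_append, List.mem_singleton] at hx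
    have ha := hb a List.mem_cons_self
    rcases hx with hx | rfl
    · have := ih (fun y hy => hb y (List.mem_cons_of_mem a hy)) hx
      simp only [List.length_cons]
      omega
    · simp only [List.length_cons]
      omega

theorem pairwise_lt_starSeq {l : List ℕ} (hl : l.Pairwise (· ≥ ·)) :
    (starSeq l).Pairwise (· < ·) := by
  induction l with
  | nil => simp [starSeq]
  | cons a l ih =>
    rw [List.pairwise_cons] at hl
    rw [starSeq_cons, List.pairwise_append]
    refine ⟨ih hl.2, List.pairwise_singleton _ _, fun x hx y hy => ?_⟩
    rw [List.mem_singleton.mp hy]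
    exact lt_of_mem_starSeq hl.1 hx

theorem oddHalves_append (s t : List ℕ) : oddHalves (s ++ t) = oddHalves s ++ oddHalves t := by
  simp [oddHalves]

theorem oddHalves_concat_of_odd (s : List ℕ) {x : ℕ} (hx : x % 2 = 1) :
    oddHalves (s ++ [x]) = oddHalves s ++ [x / 2] := by
  simp [oddHalves, hx]

theorem evenHalves_concat_of_even (s : List ℕ) {x : ℕ} (hx : x % 2 = 0) :
    evenHalves (s ++ [x]) = evenHalves s ++ [x / 2] := by
  simp [evenHalves, hx]

theorem length_oddHalves_singleton (x : ℕ) : (oddHalves [x]).length = x % 2 := by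
  rcases Nat.mod_two_eq_zero_or_one x with h | h <;> simp [oddHalves, h]

theorem length_evenHalves_add_length_oddHalves (s : List ℕ) :
    (evenHalves s).length + (oddHalves s).length = s.length := by
  induction s with
  | nil => rfl
  | cons a s ih =>
    simp only [evenHalves, oddHalves, List.filter_cons, List.length_map] at ih ⊢
    rcases Nat.mod_two_eq_zero_or_one a with h | h <;> simp [h] <;> omega

theorem two_mul_sum_halves_add_length (s : List ℕ) :
    2 * ((oddHalves s).sum + (evenHalves s).sum) + (oddHalves s).length = s.sum := by
  induction s with
  | nil => rfl
  | cons a s ih =>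
    simp only [evenHalves, oddHalves, List.filter_cons, List.length_map] at ih ⊢
    rcases Nat.mod_two_eq_zero_or_one a with h | h <;> simp [h] <;> omega

theorem pairwise_lt_map_div_two {s : List ℕ} (p : ℕ) (hs : s.Pairwise (· < ·))
    (hp : ∀ x ∈ s, x % 2 = p) : (s.map (· / 2)).Pairwise (· < ·) :=
  List.pairwise_map.mpr <| hs.imp_of_mem fun ha hb hab => by
    have := hp _ ha; have := hp _ hb; omega

theorem pairwise_lt_oddHalves {s : List ℕ} (hs : s.Pairwise (· < ·)) :
    (oddHalves s).Pairwise (· < ·) :=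
  pairwise_lt_map_div_two 1 (hs.filter _) fun x hx => by simpa using (List.mem_filter.mp hx).2

theorem pairwise_lt_evenHalves {s : List ℕ} (hs : s.Pairwise (· < ·)) :
    (evenHalves s).Pairwise (· < ·) :=
  pairwise_lt_map_div_two 0 (hs.filter _) fun x hx => by simpa using (List.mem_filter.mp hx).2

def IsOrthogonalPartition (l : List ℕ) : Prop :=
  l.Pairwise (· ≥ ·) ∧ ∀ k : ℕ, Even k → Even (l.count k)

namespace IsOrthogonalPartition

theorem tail_of_odd {a : ℕ} {l : List ℕ} (hl : IsOrthogonalPartition (a :: l)) (ha : a % 2 = 1) :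
    IsOrthogonalPartition l := by
  refine ⟨(List.pairwise_cons.mp hl.1).2, fun k hk => ?_⟩
  have hak : a ≠ k := by rintro rfl; exact Nat.not_even_iff_odd.mpr (Nat.odd_iff.mpr ha) hk
  simpa [List.count_cons, hak] using hl.2 k hk

theorem tail_tail {a : ℕ} {l : List ℕ} (hl : IsOrthogonalPartition (a :: a :: l)) :
    IsOrthogonalPartition l := by
  refine ⟨(List.pairwise_cons.mp (List.pairwise_cons.mp hl.1).2).2, fun k hk => ?_⟩
  have := hl.2 k hk
  rw [List.count_cons, List.count_cons, add_assoc] at this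
  exact (Nat.even_add.mp this).mpr (by split_ifs <;> decide)

theorem exists_eq_cons_of_even {a : ℕ} {l : List ℕ} (hl : IsOrthogonalPartition (a :: l))
    (ha : a % 2 = 0) : ∃ l', l = a :: l' := by
  have hmem : a ∈ l := by
    have := hl.2 a (Nat.even_iff.mpr ha)
    rw [List.count_cons_self] at this
    exact List.count_pos_iff.mp (Nat.pos_of_ne_zero fun h => by simp [h] at this)
  obtain ⟨hal, hl'⟩ := List.pairwise_cons.mp hl.1
  cases l with
  | nil => simp at hmem
  | cons b l =>
    have hba : b ≤ a := hal b List.mem_cons_self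
    have hab : a ≤ b := by
      rcases List.mem_cons.mp hmem with rfl | hmem
      · exact le_rfl
      · exact (List.pairwise_cons.mp hl').1 a hmem
    exact ⟨l, by rw [le_antisymm hab hba]⟩

@[elab_as_elim]
theorem induction {P : List ℕ → Prop} (nil : P [])
    (cons_odd : ∀ a l, a % 2 = 1 → P l → P (a :: l))
    (cons_cons_even : ∀ a l, a % 2 = 0 → P l → P (a :: a :: l)) :
    ∀ {l : List ℕ}, IsOrthogonalPartition l → P l
  | [], _ => nil
  | a :: l, hl => by
    rcases Nat.mod_two_eq_zero_or_one a with ha | ha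
    · obtain ⟨l', rfl⟩ := hl.exists_eq_cons_of_even ha
      exact cons_cons_even a l' ha (induction nil cons_odd cons_cons_even hl.tail_tail)
    · exact cons_odd a l ha (induction nil cons_odd cons_cons_even (hl.tail_of_odd ha))

theorem sum_mod_two {l : List ℕ} (hl : IsOrthogonalPartition l) : l.sum % 2 = l.length % 2 :=
  hl.induction rfl
    (fun a l ha ih => by simp only [List.sum_cons, List.length_cons]; omega)
    (fun a l ha ih => by simp only [List.sum_cons, List.length_cons]; omega)

theorem length_oddHalves_starSeq {l : List ℕ} (hl : IsOrthogonalPartition l) :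
    (oddHalves (starSeq l)).length = (l.length + 1) / 2 :=
  hl.induction rfl
    (fun a l ha ih => by
      rw [starSeq_cons, oddHalves_append, List.length_append, ih, length_oddHalves_singleton,
        List.length_cons]
      omega)
    (fun a l ha ih => by
      simp only [starSeq_cons, oddHalves_append, List.length_append, ih, length_oddHalves_singleton,
        List.length_cons]
      omega)

theorem odd_length {l : List ℕ} (hl : IsOrthogonalPartition l) (hs : Odd l.sum) :
    Odd l.length := by
  rw [Nat.odd_iff, ← hl.sum_mod_two, ← Nat.odd_iff]
  exact hs

theorem sum_xiB_add_sum_etaB {l : List ℕ} {r : ℕ} (hl : IsOrthogonalPartition l)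
    (hr : l.sum = 2 * r + 1) : (xiB l).sum + (etaB l).sum = r := by
  have hodd := hl.odd_length ⟨r, hr⟩
  rw [xiB, etaB, padOdd_eq_self_of_odd_length hodd]
  obtain ⟨m, hm⟩ := hodd
  set s := starSeq l
  have hs : s.Pairwise (· < ·) := pairwise_lt_starSeq hl.1
  have hOlen : (oddHalves s).length = m + 1 := by rw [hl.length_oddHalves_starSeq]; omega
  have hElen : (evenHalves s).length = m := by
    have := length_evenHalves_add_length_oddHalves s
    rw [length_starSeq] at this
    omega
  have hO := sum_unstair_add_sum_range _ (pairwise_lt_oddHalves hs)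
  have hE := sum_unstair_add_sum_range _ (pairwise_lt_evenHalves hs)
  have hsum := two_mul_sum_halves_add_length s
  rw [sum_starSeq, hr, hm] at hsum
  rw [hOlen] at hO hsum
  rw [hElen] at hE
  have := sum_range_mul_two_add_self (2 * m + 1)
  have := sum_range_mul_two_add_self (m + 1)
  have := sum_range_mul_two_add_self m
  linarith

theorem Lp_xiB_cons_of_odd {a : ℕ} {l : List ℕ} (hl : IsOrthogonalPartition (a :: l))
    (hs : Odd (a :: l).sum) (ha : Odd a) : Lp (xiB (a :: l)) = (a - 1) / 2 := by
  have hodd := hl.odd_length hs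
  rw [List.length_cons, Nat.odd_iff] at hodd
  rw [Nat.odd_iff] at ha
  have hlast : oddHalves (starSeq (a :: l)) = oddHalves (starSeq l) ++ [(a + l.length) / 2] := by
    rw [starSeq_cons, oddHalves_concat_of_odd]
    omega
  have hcount := hl.length_oddHalves_starSeq
  have hsorted := pairwise_lt_oddHalves (pairwise_lt_starSeq hl.1)
  rw [hlast] at hcount hsorted
  rw [xiB, padOdd_eq_self_of_odd_length (hl.odd_length hs), hlast]
  have := Lp_unstair_concat_add_length _ _ hsorted
  simp only [List.length_append, List.length_cons, List.length_nil] at hcount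
  omega

theorem Lp_etaB_cons_of_even {a : ℕ} {l : List ℕ} (hl : IsOrthogonalPartition (a :: l))
    (hs : Odd (a :: l).sum) (ha : Even a) : Lp (etaB (a :: l)) = a / 2 + 1 := by
  have hodd := hl.odd_length hs
  rw [List.length_cons, Nat.odd_iff] at hodd
  rw [Nat.even_iff] at ha
  have hlast : evenHalves (starSeq (a :: l)) = evenHalves (starSeq l) ++ [(a + l.length) / 2] := by
    rw [starSeq_cons, evenHalves_concat_of_even]
    omega
  have hcount := length_evenHalves_add_length_oddHalves (starSeq (a :: l))
  rw [hl.length_oddHalves_starSeq, length_starSeq] at hcount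
  have hsorted := pairwise_lt_evenHalves (pairwise_lt_starSeq hl.1)
  rw [hlast] at hcount hsorted
  rw [etaB, padOdd_eq_self_of_odd_length (hl.odd_length hs), hlast]
  have := Lp_unstair_concat_add_length _ _ hsorted
  simp only [List.length_append, List.length_cons, List.length_nil] at hcount
  omega

end IsOrthogonalPartition

theorem stmt6_general (r : ℕ) (l : List ℕ)
    (hsort : l.Pairwise (· ≥ ·))
    (hsum : l.sum = 2 * r + 1)
    (hB : ∀ k : ℕ, Even k → Even (l.count k)) :
    ((xiB l).sum + (etaB l).sum = r) ∧
    (Odd (l.headD 0) → Lp (xiB l) = (l.headD 0 - 1) / 2) ∧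
    (Even (l.headD 0) → Lp (etaB l) = l.headD 0 / 2 + 1) := by
  have hl : IsOrthogonalPartition l := ⟨hsort, hB⟩
  refine ⟨hl.sum_xiB_add_sum_etaB hsum, ?_⟩
  cases l with
  | nil => simp at hsum
  | cons a l => exact ⟨hl.Lp_xiB_cons_of_odd ⟨r, hsum⟩, hl.Lp_etaB_cons_of_even ⟨r, hsum⟩⟩

theorem stmt6 (r : ℕ) (l : List ℕ)
    (hsort : l.Pairwise (· ≥ ·))
    (hpos : ∀ x ∈ l, 0 < x)
    (hsum : l.sum = 2 * r + 1)
    (hB : ∀ k : ℕ, Even k → Even (l.count k)) :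
    ((xiB l).sum + (etaB l).sum = r) ∧
    (Odd (l.headD 0) → Lp (xiB l) = (l.headD 0 - 1) / 2) ∧
    (Even (l.headD 0) → Lp (etaB l) = l.headD 0 / 2 + 1) :=
  stmt6_general r l hsort hsum hB

end Stmt6
end

section
/- Let λ = (λ₁ ≥ λ₂ ≥ ... ≥ λ_t) be a partition of 2r in which every odd part occurs an even number of times (a C-partition). Let (ξ, η) = φ_C(λ) be the ordered pair of partitions with |ξ| + |η| = r attached to λ by the type-C symbol procedure. Then: (i) if λ₁ is odd, then L(η) = (λ₁+1)/2; (ii) if λ₁ is even, then L(ξ) = λ₁/2; (iii) if λ₁ is even and λ₂ = λ₁, then L(ξ) = L(η) = λ₁/2. -/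
/-!
STATEMENT 7: Properties of the type-C symbol map `φ_C`.  A partition `l` of `2r`
(weakly decreasing list of positive integers) in which every odd part occurs an
even number of times is sent to the ordered pair of partitions `(ξ, η)` by:
padding to even length, forming `λ*_i = λ_i + (i-1)` (increasing order), splitting
into odd entries `2y+1` (giving ξ) and even entries `2x` (giving η), and
subtracting staircases.  Claims (with `L` = largest part, `λ₁ = l.headD 0`,
`λ₂ = l.getD 1 0`):
|ξ| + |η| = r; (i) λ₁ odd ⇒ L(η) = (λ₁+1)/2; (ii) λ₁ even ⇒ L(ξ) = λ₁/2;
(iii) λ₁ even and λ₂ = λ₁ ⇒ L(ξ) = L(η) = λ₁/2.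
-/

namespace Stmt7

/-- Largest part of a partition given as a list. -/
def Lp (l : List ℕ) : ℕ := l.foldr max 0

/-- Pad a (decreasing) partition with a trailing zero to make its length even. -/
def padEven (l : List ℕ) : List ℕ := if Even l.length then l else l ++ [0]

/-- `λ*`: read the padded partition in increasing order and add `(i-1)`. -/
def starSeq (l : List ℕ) : List ℕ :=
  List.zipWith (· + ·) l.reverse (List.range l.length)

/-- Halves of the even entries (`2x ↦ x`), in increasing order. -/
def evenHalves (s : List ℕ) : List ℕ := (s.filter (fun x => x % 2 = 0)).map (· / 2)

/-- Halves of the odd entries (`2y+1 ↦ y`), in increasing order. -/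
def oddHalves (s : List ℕ) : List ℕ := (s.filter (fun x => x % 2 = 1)).map (· / 2)

/-- Subtract the staircase `(0,1,2,…)` from an increasing sequence. -/
def unstair (s : List ℕ) : List ℕ :=
  List.zipWith (fun a i => a - i) s (List.range s.length)

/-- First member of the ordered pair `φ_C(l)`. -/
def xiC (l : List ℕ) : List ℕ := unstair (oddHalves (starSeq (padEven l)))

/-- Second member of the ordered pair `φ_C(l)`. -/
def etaC (l : List ℕ) : List ℕ := unstair (evenHalves (starSeq (padEven l)))

/-
Let `p` be the padded partition, of length `2m`. Peeling parts off from the largest one, an even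
part `x` with `i` parts after it gives the entry `x + i` of `λ*`, of the parity of `i`, while the
largest odd part comes with an equal neighbour, and the two give one odd and one even entry. So
exactly `m` entries of `λ*` are odd, `ξ` and `η` both have `m` parts, and `|ξ| + |η| = r` follows
from `Σ λ* = 2r + (2m choose 2)`. As `λ*` is strictly increasing, subtracting the staircase leaves
weakly increasing sequences, so `L(ξ)` and `L(η)` are read off the last odd and the last even
entry of `λ*`: the last entry is `λ₁ + 2m - 1`, the one before it is `λ₂ + 2m - 2`.
-/

open List

theorem Lp_append_singleton (A : List ℕ) (a : ℕ) : Lp (A ++ [a]) = max (Lp A) a := by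
  induction A with
  | nil => simp [Lp]
  | cons b A ih => simp only [Lp, cons_append, foldr_cons] at ih ⊢; rw [ih, max_assoc]

theorem starSeq_cons (x : ℕ) (p : List ℕ) : starSeq (x :: p) = starSeq p ++ [x + p.length] := by
  simp [starSeq, range_succ, zipWith_append]

theorem length_starSeq (p : List ℕ) : (starSeq p).length = p.length := by
  simp [starSeq]

theorem lt_add_length_of_mem_starSeq {p : List ℕ} {b : ℕ} (hb : ∀ x ∈ p, x ≤ b) :
    ∀ y ∈ starSeq p, y < b + p.length := by
  induction p with
  | nil => simp [starSeq]
  | cons x p ih =>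
    intro y hy
    rw [starSeq_cons, mem_append, mem_singleton] at hy
    have hx := hb x mem_cons_self
    rcases hy with hy | rfl
    · have := ih (fun z hz => hb z (mem_cons_of_mem x hz)) y hy
      simp only [length_cons]; omega
    · simp only [length_cons]; omega

theorem pairwise_lt_starSeq {p : List ℕ} (hp : p.Pairwise (· ≥ ·)) :
    (starSeq p).Pairwise (· < ·) := by
  induction p with
  | nil => simp [starSeq]
  | cons x p ih =>
    rw [pairwise_cons] at hp
    rw [starSeq_cons, pairwise_append]
    exact ⟨ih hp.2, pairwise_singleton _ _, fun y hy z hz =>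
      (mem_singleton.1 hz) ▸ lt_add_length_of_mem_starSeq hp.1 y hy⟩

theorem choose_two_succ (n : ℕ) : (n + 1).choose 2 = n.choose 2 + n := by
  rw [Nat.choose_succ_succ', Nat.choose_one_right, add_comm]

theorem sum_starSeq (p : List ℕ) : (starSeq p).sum = p.sum + p.length.choose 2 := by
  induction p with
  | nil => rfl
  | cons x p ih =>
    rw [starSeq_cons, sum_append, ih, sum_singleton, sum_cons, length_cons, choose_two_succ]
    omega

theorem unstair_append_singleton (X : List ℕ) (y : ℕ) :
    unstair (X ++ [y]) = unstair X ++ [y - X.length] := by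
  simp [unstair, range_succ, zipWith_append]

theorem length_le_of_pairwise_lt_append {X : List ℕ} {y : ℕ}
    (h : (X ++ [y]).Pairwise (· < ·)) :
    X.length ≤ y := by
  rw [pairwise_append] at h
  have hsub : X ⊆ range y := fun x hx => mem_range.2 (h.2.2 x hx y (mem_singleton_self y))
  simpa using (h.1.nodup.subperm hsub).length_le

theorem sum_unstair {X : List ℕ} (hX : X.Pairwise (· < ·)) :
    (unstair X).sum + X.length.choose 2 = X.sum := by
  induction X using reverseRecOn with
  | nil => rfl
  | append_singleton X y ih =>
    have := length_le_of_pairwise_lt_append hX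
    rw [unstair_append_singleton, sum_append, sum_append, sum_singleton, sum_singleton,
      length_append, length_singleton, choose_two_succ, ← ih (pairwise_append.1 hX).1]
    omega

theorem Lp_unstair_append_singleton {X : List ℕ} {y : ℕ} (h : (X ++ [y]).Pairwise (· < ·)) :
    Lp (unstair (X ++ [y])) = y - X.length := by
  induction X using reverseRecOn generalizing y with
  | nil => simp [unstair, Lp]
  | append_singleton X z ih =>
    have hzy : z < y := (pairwise_append.1 h).2.2 z mem_concat_self y (mem_singleton_self y)
    have hz := ih (pairwise_append.1 h).1
    have hXz := length_le_of_pairwise_lt_append (pairwise_append.1 h).1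
    rw [unstair_append_singleton, Lp_append_singleton, hz, length_append, length_singleton]
    omega

theorem oddHalves_append_singleton (s : List ℕ) (a : ℕ) :
    oddHalves (s ++ [a]) = oddHalves s ++ if a % 2 = 1 then [a / 2] else [] := by
  unfold oddHalves; split_ifs <;> simp [*]

theorem evenHalves_append_singleton (s : List ℕ) (a : ℕ) :
    evenHalves (s ++ [a]) = evenHalves s ++ if a % 2 = 0 then [a / 2] else [] := by
  unfold evenHalves; split_ifs <;> simp [*]

theorem pairwise_lt_oddHalves {s : List ℕ} (hs : s.Pairwise (· < ·)) :
    (oddHalves s).Pairwise (· < ·) := by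
  rw [oddHalves, pairwise_map, pairwise_filter]
  exact hs.imp fun h ha hb => by simp at ha hb; omega

theorem pairwise_lt_evenHalves {s : List ℕ} (hs : s.Pairwise (· < ·)) :
    (evenHalves s).Pairwise (· < ·) := by
  rw [evenHalves, pairwise_map, pairwise_filter]
  exact hs.imp fun h ha hb => by simp at ha hb; omega

theorem sum_halves (s : List ℕ) :
    2 * ((oddHalves s).sum + (evenHalves s).sum) + (oddHalves s).length = s.sum := by
  induction s with
  | nil => rfl
  | cons a s ih =>
    simp only [oddHalves, evenHalves, filter_cons] at ih ⊢
    split_ifs <;> simp_all <;> omega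

theorem length_evenHalves_add_length_oddHalves (s : List ℕ) :
    (evenHalves s).length + (oddHalves s).length = s.length := by
  induction s with
  | nil => rfl
  | cons a s ih =>
    simp only [oddHalves, evenHalves, filter_cons] at ih ⊢
    split_ifs <;> simp_all <;> omega

theorem length_oddHalves_append_singleton (s : List ℕ) (a : ℕ) :
    (oddHalves (s ++ [a])).length = (oddHalves s).length + a % 2 := by
  rw [oddHalves_append_singleton]; split_ifs <;> simp <;> omega

theorem exists_eq_cons_of_even_count {x : ℕ} {p : List ℕ} (hp : (x :: p).Pairwise (· ≥ ·))
    (hx : Even ((x :: p).count x)) : ∃ q, p = x :: q := by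
  rw [count_cons_self, Nat.even_add_one] at hx
  have hmem : x ∈ p := count_pos_iff.1 (Nat.pos_of_ne_zero fun h0 => hx (h0 ▸ Even.zero))
  obtain _ | ⟨y, q⟩ := p
  · simp at hmem
  rw [pairwise_cons, pairwise_cons] at hp
  have hxy : x ≤ y := by
    rcases mem_cons.1 hmem with rfl | hq
    · exact le_rfl
    · exact hp.2.1 x hq
  exact ⟨q, by rw [le_antisymm (hp.1 y mem_cons_self) hxy]⟩

theorem length_oddHalves_starSeq {p : List ℕ} (hp : p.Pairwise (· ≥ ·))
    (hC : ∀ k : ℕ, Odd k → Even (p.count k)) :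
    (oddHalves (starSeq p)).length = p.length / 2 := by
  induction h : p.length using Nat.strong_induction_on generalizing p with
  | _ n ih =>
  obtain _ | ⟨x, p⟩ := p
  · simp [← h, starSeq, oddHalves]
  rcases Nat.even_or_odd x with hx | hx
  · have hCp : ∀ k, Odd k → Even (p.count k) := fun k hk => by
      have hxk : x ≠ k := fun e => Nat.not_even_iff_odd.2 hk (e ▸ hx)
      simpa [count_cons, hxk] using hC k hk
    rw [starSeq_cons, length_oddHalves_append_singleton,
      ih p.length (by rw [← h, length_cons]; omega) (pairwise_cons.1 hp).2 hCp rfl, ← h, length_cons]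
    rw [Nat.even_iff] at hx
    omega
  · obtain ⟨q, rfl⟩ := exists_eq_cons_of_even_count hp (hC x hx)
    have hCq : ∀ k, Odd k → Even (q.count k) := fun k hk => by
      by_cases hxk : x = k
      · subst hxk; simpa [count_cons_self, Nat.even_add_one] using hC x hk
      · simpa [count_cons, hxk] using hC k hk
    rw [starSeq_cons, starSeq_cons, length_oddHalves_append_singleton,
      length_oddHalves_append_singleton,
      ih q.length (by rw [← h, length_cons, length_cons]; omega)
        (pairwise_cons.1 (pairwise_cons.1 hp).2).2 hCq rfl,
      ← h]
    simp only [length_cons]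
    rw [Nat.odd_iff] at hx
    omega

theorem length_evenHalves_starSeq {p : List ℕ} (hp : p.Pairwise (· ≥ ·))
    (hC : ∀ k : ℕ, Odd k → Even (p.count k)) :
    (evenHalves (starSeq p)).length = (p.length + 1) / 2 := by
  have := length_evenHalves_add_length_oddHalves (starSeq p)
  rw [length_oddHalves_starSeq hp hC, length_starSeq] at this
  omega

theorem choose_two_add_self (m : ℕ) : (m + m).choose 2 = 4 * m.choose 2 + m := by
  apply Nat.cast_injective (R := ℚ)
  push_cast [Nat.cast_choose_two]
  ring

theorem sum_unstair_halves_starSeq {p : List ℕ} (hp : p.Pairwise (· ≥ ·))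
    (hC : ∀ k : ℕ, Odd k → Even (p.count k)) (hev : Even p.length) :
    2 * ((unstair (oddHalves (starSeq p))).sum + (unstair (evenHalves (starSeq p))).sum) = p.sum := by
  obtain ⟨m, hm⟩ := hev
  have hs := pairwise_lt_starSeq hp
  have hξ := sum_unstair (pairwise_lt_oddHalves hs)
  have hη := sum_unstair (pairwise_lt_evenHalves hs)
  rw [length_oddHalves_starSeq hp hC, hm, show (m + m) / 2 = m by omega] at hξ
  rw [length_evenHalves_starSeq hp hC, hm, show (m + m + 1) / 2 = m by omega] at hη
  have hS := sum_starSeq p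
  rw [hm, choose_two_add_self] at hS
  have := sum_halves (starSeq p)
  rw [length_oddHalves_starSeq hp hC, hm] at this
  omega

theorem Lp_unstair_oddHalves_starSeq_cons {x : ℕ} {p : List ℕ} (hp : (x :: p).Pairwise (· ≥ ·))
    (h : (x + p.length) % 2 = 1) :
    Lp (unstair (oddHalves (starSeq (x :: p)))) + (oddHalves (starSeq (x :: p))).length =
      (x + p.length) / 2 + 1 := by
  have hs := pairwise_lt_oddHalves (pairwise_lt_starSeq hp)
  rw [starSeq_cons, oddHalves_append_singleton, if_pos h] at hs ⊢
  rw [Lp_unstair_append_singleton hs, length_append, length_singleton]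
  have := length_le_of_pairwise_lt_append hs
  omega

theorem Lp_unstair_evenHalves_starSeq_cons {x : ℕ} {p : List ℕ} (hp : (x :: p).Pairwise (· ≥ ·))
    (h : (x + p.length) % 2 = 0) :
    Lp (unstair (evenHalves (starSeq (x :: p)))) + (evenHalves (starSeq (x :: p))).length =
      (x + p.length) / 2 + 1 := by
  have hs := pairwise_lt_evenHalves (pairwise_lt_starSeq hp)
  rw [starSeq_cons, evenHalves_append_singleton, if_pos h] at hs ⊢
  rw [Lp_unstair_append_singleton hs, length_append, length_singleton]
  have := length_le_of_pairwise_lt_append hs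
  omega

theorem Lp_unstair_evenHalves_starSeq_of_odd {p : List ℕ} (hp : p.Pairwise (· ≥ ·))
    (hC : ∀ k : ℕ, Odd k → Even (p.count k)) (hev : Even p.length) (hx : Odd (p.headD 0)) :
    Lp (unstair (evenHalves (starSeq p))) = (p.headD 0 + 1) / 2 := by
  obtain _ | ⟨x, p⟩ := p
  · simp at hx
  have hlen := length_evenHalves_starSeq hp hC
  rw [headD_cons] at hx ⊢
  rw [Nat.odd_iff] at hx
  rw [Nat.even_iff, length_cons] at hev
  have := Lp_unstair_evenHalves_starSeq_cons hp (by omega)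
  rw [length_cons] at hlen
  omega

theorem Lp_unstair_oddHalves_starSeq_of_even {p : List ℕ} (hp : p.Pairwise (· ≥ ·))
    (hC : ∀ k : ℕ, Odd k → Even (p.count k)) (hev : Even p.length) (hx : Even (p.headD 0)) :
    Lp (unstair (oddHalves (starSeq p))) = p.headD 0 / 2 := by
  obtain _ | ⟨x, p⟩ := p
  · rfl
  have hlen := length_oddHalves_starSeq hp hC
  rw [headD_cons] at hx ⊢
  rw [Nat.even_iff] at hx
  rw [Nat.even_iff, length_cons] at hev
  have := Lp_unstair_oddHalves_starSeq_cons hp (by omega)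
  rw [length_cons] at hlen
  omega

theorem Lp_unstair_evenHalves_starSeq_of_even_of_getD_one {p : List ℕ} (hp : p.Pairwise (· ≥ ·))
    (hC : ∀ k : ℕ, Odd k → Even (p.count k)) (hev : Even p.length) (hx : Even (p.headD 0))
    (h2 : p.getD 1 0 = p.headD 0) :
    Lp (unstair (evenHalves (starSeq p))) = p.headD 0 / 2 := by
  obtain _ | ⟨x, _ | ⟨y, p⟩⟩ := p
  · rfl
  · simp at hev
  obtain rfl : y = x := h2
  have hlen := length_evenHalves_starSeq hp hC
  rw [headD_cons] at hx ⊢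
  rw [Nat.even_iff] at hx
  rw [Nat.even_iff, length_cons, length_cons] at hev
  have hdrop : evenHalves (starSeq (y :: y :: p)) = evenHalves (starSeq (y :: p)) := by
    rw [starSeq_cons y (y :: p), evenHalves_append_singleton, if_neg (by simp; omega), append_nil]
  have := Lp_unstair_evenHalves_starSeq_cons (pairwise_cons.1 hp).2 (by omega)
  rw [hdrop] at hlen ⊢
  simp only [length_cons] at hlen
  omega

theorem even_length_padEven (l : List ℕ) : Even (padEven l).length := by
  unfold padEven; split_ifs with h
  · exact h
  · simpa [Nat.even_add_one] using h

theorem pairwise_padEven {l : List ℕ} (hl : l.Pairwise (· ≥ ·)) : (padEven l).Pairwise (· ≥ ·) := by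
  unfold padEven; split_ifs
  · exact hl
  · simpa [pairwise_append] using hl

theorem sum_padEven (l : List ℕ) : (padEven l).sum = l.sum := by
  unfold padEven; split_ifs <;> simp

theorem count_padEven {l : List ℕ} {k : ℕ} (hk : k ≠ 0) : (padEven l).count k = l.count k := by
  unfold padEven; split_ifs <;> simp [Ne.symm hk]

theorem headD_padEven (l : List ℕ) : (padEven l).headD 0 = l.headD 0 := by
  unfold padEven; split_ifs <;> cases l <;> simp

theorem getD_one_padEven (l : List ℕ) : (padEven l).getD 1 0 = l.getD 1 0 := by
  unfold padEven; split_ifs <;> rcases l with _ | ⟨a, _ | ⟨b, l⟩⟩ <;> simp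

theorem stmt7_general (r : ℕ) (l : List ℕ)
    (hsort : l.Pairwise (· ≥ ·))
    (hsum : l.sum = 2 * r)
    (hC : ∀ k : ℕ, Odd k → Even (l.count k)) :
    ((xiC l).sum + (etaC l).sum = r) ∧
    (Odd (l.headD 0) → Lp (etaC l) = (l.headD 0 + 1) / 2) ∧
    (Even (l.headD 0) → Lp (xiC l) = l.headD 0 / 2) ∧
    (Even (l.headD 0) → l.getD 1 0 = l.headD 0 →
      Lp (xiC l) = l.headD 0 / 2 ∧ Lp (etaC l) = l.headD 0 / 2) := by
  have hp := pairwise_padEven hsort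
  have hpC : ∀ k : ℕ, Odd k → Even ((padEven l).count k) := fun k hk => by
    rw [count_padEven (by rintro rfl; simp at hk)]; exact hC k hk
  have hev := even_length_padEven l
  rw [← headD_padEven, ← getD_one_padEven]
  refine ⟨?_, Lp_unstair_evenHalves_starSeq_of_odd hp hpC hev,
    Lp_unstair_oddHalves_starSeq_of_even hp hpC hev, fun hx h2 =>
    ⟨Lp_unstair_oddHalves_starSeq_of_even hp hpC hev hx,
      Lp_unstair_evenHalves_starSeq_of_even_of_getD_one hp hpC hev hx h2⟩⟩
  have := sum_unstair_halves_starSeq hp hpC hev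
  rw [sum_padEven] at this
  unfold xiC etaC
  omega

theorem stmt7 (r : ℕ) (hr : 0 < r) (l : List ℕ)
    (hsort : l.Pairwise (· ≥ ·))
    (hpos : ∀ x ∈ l, 0 < x)
    (hsum : l.sum = 2 * r)
    (hC : ∀ k : ℕ, Odd k → Even (l.count k)) :
    ((xiC l).sum + (etaC l).sum = r) ∧
    (Odd (l.headD 0) → Lp (etaC l) = (l.headD 0 + 1) / 2) ∧
    (Even (l.headD 0) → Lp (xiC l) = l.headD 0 / 2) ∧
    (Even (l.headD 0) → l.getD 1 0 = l.headD 0 →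
      Lp (xiC l) = l.headD 0 / 2 ∧ Lp (etaC l) = l.headD 0 / 2) :=
  stmt7_general r l hsort hsum hC

end Stmt7
end

section
/- Let G̃ be a finite group, G ◁ G̃ a normal subgroup with G̃/G abelian, and suppose G̃ = G·T̃ for an abelian subgroup T̃. Let σ̃ be an irreducible representation of G̃ whose restriction to G decomposes multiplicity-freely as σ₁ ⊕ ... ⊕ σ_k. Let χ̃ be a character of a subgroup B̃ ≤ G̃ with B̃ = (B̃∩G)·(B̃∩T̃), and suppose v ∈ σ̃ is a nonzero vector on which B̃ acts by χ̃. Write v = v₁ + ... + v_k with vᵢ in the σᵢ-isotypic component. If T̃ ∩ B̃ acts transitively (by conjugation permutation) on the set {σ₁,...,σ_k}, then vᵢ ≠ 0 for every i. -/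
/-!
STATEMENT 16: Clifford-theoretic nonvanishing of components.  `G ◁ G̃` finite with
`G̃/G` abelian and `G̃ = G·T̃` for an abelian subgroup `T̃`; `σ̃ = (ρ, Vc)` an
irreducible representation of `G̃` whose restriction to `G` decomposes
multiplicity-freely as the internal direct sum of irreducible `G`-subrepresentations
`V₁ ⊕ ⋯ ⊕ V_k`; `B̃ ≤ G̃` with `B̃ = (B̃∩G)·(B̃∩T̃)`; `χ̃` a character of `B̃` and
`v ≠ 0` a `χ̃`-eigenvector for `B̃`.  If `T̃ ∩ B̃` permutes the summands
transitively (by conjugation), then every component of `v` is nonzero: writing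
`v = v₁ + ⋯ + v_k` with `vᵢ ∈ Vᵢ`, we have `vᵢ ≠ 0` for all `i`.
-/
theorem stmt16 {Gt : Type*} [Group Gt] [Finite Gt]
    {Vc : Type*} [AddCommGroup Vc] [Module ℂ Vc] [FiniteDimensional ℂ Vc]
    (G : Subgroup Gt) [G.Normal] (Tt Bt : Subgroup Gt)
    (hTab : ∀ a ∈ Tt, ∀ b ∈ Tt, a * b = b * a)
    (habel : ∀ a b : Gt, a * b * a⁻¹ * b⁻¹ ∈ G)            -- G̃/G abelian
    (hGT : ∀ x : Gt, ∃ g ∈ G, ∃ t ∈ Tt, x = g * t)          -- G̃ = G·T̃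
    (hBt : ∀ x ∈ Bt, ∃ g ∈ Bt ⊓ G, ∃ t ∈ Bt ⊓ Tt, x = g * t) -- B̃ = (B̃∩G)(B̃∩T̃)
    (ρ : Representation ℂ Gt Vc)
    (hirr : ∀ U : Submodule ℂ Vc, (∀ g : Gt, ∀ u ∈ U, ρ g u ∈ U) → U = ⊥ ∨ U = ⊤)
    (k : ℕ) (Vi : Fin k → Submodule ℂ Vc)
    (hint : DirectSum.IsInternal Vi)                        -- Vc = V₁ ⊕ ⋯ ⊕ V_k
    (hGstab : ∀ i, ∀ g ∈ G, ∀ u ∈ Vi i, ρ g u ∈ Vi i)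
    (hne : ∀ i, Vi i ≠ ⊥)
    (hirrG : ∀ i, ∀ F ≤ Vi i, (∀ g ∈ G, ∀ u ∈ F, ρ g u ∈ F) → F = ⊥ ∨ F = Vi i)
    (hmf : ∀ i j, i ≠ j →                                   -- multiplicity-free
      ¬ ∃ e : (Vi i) ≃ₗ[ℂ] (Vi j), ∀ g ∈ G, ∀ p q : Vi i,
          (q : Vc) = ρ g p → (e q : Vc) = ρ g (e p))
    (χ : Bt →* ℂˣ) (v : Vc) (hv : v ≠ 0)
    (heig : ∀ b : Bt, ρ (b : Gt) v = ((χ b : ℂˣ) : ℂ) • v)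
    (htrans : ∀ i j, ∃ t ∈ Tt ⊓ Bt, Submodule.map (ρ t) (Vi i) = Vi j) :
    ∀ vc : Fin k → Vc, (∀ i, vc i ∈ Vi i) → (∑ i, vc i) = v → ∀ i, vc i ≠ 0 := by
  classical
  -- ρ of any element is injective
  have hρinv : ∀ (t : Gt) (u : Vc), ρ t⁻¹ (ρ t u) = u := by
    intro t u
    have : (ρ t⁻¹ * ρ t) u = u := by rw [← map_mul, inv_mul_cancel, map_one]; rfl
    simpa using this
  have hρinj : ∀ t : Gt, Function.Injective (ρ t) := by
    intro t x y h
    have := congrArg (ρ t⁻¹) h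
    rwa [hρinv, hρinv] at this
  -- projections
  obtain ⟨proj, hmemP, hPmem, hPsum⟩ :
      ∃ proj : Fin k → (Vc →ₗ[ℂ] Vc),
        (∀ m u, proj m u ∈ Vi m) ∧
        (∀ m l (u : Vc), u ∈ Vi l → proj m u = if l = m then u else 0) ∧
        (∀ u, ∑ m, proj m u = u) := by
    set e := LinearEquiv.ofBijective (DirectSum.coeLinearMap Vi) hint with he
    refine ⟨fun m => (Vi m).subtype ∘ₗ
      (DirectSum.component ℂ (Fin k) (fun i => ↥(Vi i)) m) ∘ₗ e.symm.toLinearMap,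
      ?_, ?_, ?_⟩
    · intro m u; exact ((DirectSum.component ℂ (Fin k) (fun i => ↥(Vi i)) m) (e.symm u)).2
    · intro m l u hu
      by_cases h : l = m
      · subst h
        rw [if_pos rfl]
        have h2 : ((Vi l).subtype ∘ₗ
            (DirectSum.component ℂ (Fin k) (fun i => ↥(Vi i)) l) ∘ₗ e.symm.toLinearMap) u
            = ((e.symm u l : Vc)) := rfl
        rw [h2, he, hint.ofBijective_coeLinearMap_of_mem hu]
      · rw [if_neg h]
        have h2 : ((Vi m).subtype ∘ₗ
            (DirectSum.component ℂ (Fin k) (fun i => ↥(Vi i)) m) ∘ₗ e.symm.toLinearMap) u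
            = ((e.symm u m : Vc)) := rfl
        rw [h2, he, hint.ofBijective_coeLinearMap_of_mem_ne h hu]
        rfl
    · intro u
      have hx : ∑ m, DirectSum.of (fun i => ↥(Vi i)) m (e.symm u m) = e.symm u :=
        DirectSum.sum_univ_of _
      have := congrArg (DirectSum.coeLinearMap Vi) hx
      rw [map_sum] at this
      simp only [DirectSum.coeLinearMap_of] at this
      have he2 : DirectSum.coeLinearMap Vi (e.symm u) = u := e.apply_symm_apply u
      calc ∑ m, ((Vi m).subtype ∘ₗ
            (DirectSum.component ℂ (Fin k) (fun i => ↥(Vi i)) m) ∘ₗ e.symm.toLinearMap) u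
          = ∑ m, ((e.symm u m : Vc)) := by rfl
        _ = u := by rw [this, he2]
  -- characterization of components
  have hchar : ∀ (c : Fin k → Vc) (u : Vc), (∀ l, c l ∈ Vi l) → ∑ l, c l = u →
      ∀ m, proj m u = c m := by
    intro c u hc hsum m
    rw [← hsum, map_sum]
    have : ∀ l, proj m (c l) = if l = m then c l else 0 := fun l => hPmem m l (c l) (hc l)
    rw [Finset.sum_congr rfl (fun l _ => this l)]
    simp
  -- G-equivariance of projections
  have hequiv : ∀ g ∈ G, ∀ m u, proj m (ρ g u) = ρ g (proj m u) := by
    intro g hg m u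
    have h1 : ∀ l, ρ g (proj l u) ∈ Vi l := fun l => hGstab l g hg _ (hmemP l u)
    have h2 : ∑ l, ρ g (proj l u) = ρ g u := by rw [← map_sum, hPsum]
    exact hchar _ _ h1 h2 m
  -- classification of nonzero irreducible G-submodules
  have hdist : ∀ m m' : Fin k, Vi m = Vi m' → m = m' := by
    intro m m' h
    by_contra hne'
    exact hmf m m' hne' ⟨LinearEquiv.ofEq _ _ h, by
      intro g hg p q hq
      simpa using hq⟩
  have hclass : ∀ W : Submodule ℂ Vc, W ≠ ⊥ → (∀ g ∈ G, ∀ u ∈ W, ρ g u ∈ W) →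
      (∀ F ≤ W, (∀ g ∈ G, ∀ u ∈ F, ρ g u ∈ F) → F = ⊥ ∨ F = W) → ∃ m, W = Vi m := by
    intro W hWne hWstab hWirr
    -- kernels of projections restricted to W
    have hK : ∀ m, (W ⊓ LinearMap.ker (proj m) = ⊥) ∨ (W ⊓ LinearMap.ker (proj m) = W) := by
      intro m
      refine hWirr _ inf_le_left ?_
      rintro g hg u ⟨huW, huK⟩
      refine ⟨hWstab g hg u huW, LinearMap.mem_ker.mpr ?_⟩
      rw [hequiv g hg, LinearMap.mem_ker.mp huK, map_zero]
    obtain ⟨w, hwW, hw0⟩ := Submodule.exists_mem_ne_zero_of_ne_bot hWne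
    have hexm : ∃ m, W ⊓ LinearMap.ker (proj m) = ⊥ := by
      by_contra hall
      push_neg at hall
      have hz : ∀ m, proj m w = 0 := by
        intro m
        have hKm := (hK m).resolve_left (hall m)
        have hwK : w ∈ W ⊓ LinearMap.ker (proj m) := by rw [hKm]; exact hwW
        exact hwK.2
      have hs := hPsum w
      rw [Finset.sum_congr rfl (fun m _ => hz m)] at hs
      simp at hs
      exact hw0 hs.symm
    obtain ⟨m, hm⟩ := hexm
    -- for any m' with trivial kernel, we get an iso W ≃ Vi m'
    have hiso : ∀ m', W ⊓ LinearMap.ker (proj m') = ⊥ →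
        ∃ e : W ≃ₗ[ℂ] Vi m', ∀ w : W, (e w : Vc) = proj m' w := by
      intro m' hm'
      have hres : ∀ x ∈ W, proj m' x ∈ Vi m' := fun x _ => hmemP m' x
      have hinj : Function.Injective ((proj m').restrict hres) := by
        intro x y hxy
        have : proj m' ((x : Vc) - y) = 0 := by
          rw [map_sub]
          have := congrArg (Subtype.val) hxy
          simp only [LinearMap.restrict_apply] at this
          rw [this]; exact sub_self _
        have hmem : ((x : Vc) - y) ∈ W ⊓ LinearMap.ker (proj m') :=
          ⟨sub_mem x.2 y.2, this⟩
        rw [hm'] at hmem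
        have hsub := Submodule.mem_bot ℂ |>.mp hmem
        exact Subtype.ext (sub_eq_zero.mp hsub)
      have himg : Submodule.map (proj m') W = Vi m' := by
        refine (hirrG m' _ (Submodule.map_le_iff_le_comap.mpr
          (fun x hx => hres x hx)) ?_).resolve_left ?_
        · rintro g hg u ⟨x, hxW, rfl⟩
          exact ⟨ρ g x, hWstab g hg x hxW, hequiv g hg m' x⟩
        · intro hbot
          have : proj m' w = 0 := by
            have : proj m' w ∈ Submodule.map (proj m') W := ⟨w, hwW, rfl⟩
            rw [hbot] at this
            exact Submodule.mem_bot ℂ |>.mp this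
          have hmem : w ∈ W ⊓ LinearMap.ker (proj m') := ⟨hwW, this⟩
          rw [hm'] at hmem
          exact hw0 (Submodule.mem_bot ℂ |>.mp hmem)
      have hsurj : Function.Surjective ((proj m').restrict hres) := by
        intro y
        have hy : (y : Vc) ∈ Submodule.map (proj m') W := by rw [himg]; exact y.2
        obtain ⟨x, hxW, hxy⟩ := hy
        exact ⟨⟨x, hxW⟩, Subtype.ext hxy⟩
      exact ⟨LinearEquiv.ofBijective _ ⟨hinj, hsurj⟩, fun w => rfl⟩
    -- uniqueness: all other kernels are all of W
    have huniq : ∀ m', m' ≠ m → W ⊓ LinearMap.ker (proj m') = W := by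
      intro m' hm'ne
      refine (hK m').resolve_left ?_
      intro hm'
      obtain ⟨em, hem⟩ := hiso m hm
      obtain ⟨em', hem'⟩ := hiso m' hm'
      refine hmf m m' (fun h => hm'ne h.symm) ⟨em.symm.trans em', ?_⟩
      intro g hg p q hq
      set wp := em.symm p with hwp
      set wq := em.symm q with hwq
      have h1 : proj m (wq : Vc) = ρ g (proj m (wp : Vc)) := by
        have e1 : proj m (wp : Vc) = (p : Vc) := by
          rw [← hem wp, hwp, em.apply_symm_apply]
        have e2 : proj m (wq : Vc) = (q : Vc) := by
          rw [← hem wq, hwq, em.apply_symm_apply]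
        rw [e1, e2, hq]
      have h2 : (wq : Vc) = ρ g (wp : Vc) := by
        have hmemq : ((wq : Vc) - ρ g (wp : Vc)) ∈ W ⊓ LinearMap.ker (proj m) := by
          refine ⟨sub_mem wq.2 (hWstab g hg _ wp.2), LinearMap.mem_ker.mpr ?_⟩
          rw [map_sub, h1, hequiv g hg]
          exact sub_self _
        rw [hm] at hmemq
        exact sub_eq_zero.mp (Submodule.mem_bot ℂ |>.mp hmemq)
      show ((em' wq : Vc)) = ρ g (em' wp : Vc)
      rw [hem' wq, hem' wp, h2, hequiv g hg]
    -- hence W ≤ Vi m, and by irreducibility W = Vi m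
    have hle : W ≤ Vi m := by
      intro x hx
      have hz : ∀ m', m' ≠ m → proj m' x = 0 := by
        intro m' hm'ne
        have hxm : x ∈ W ⊓ LinearMap.ker (proj m') := by
          rw [huniq m' hm'ne]; exact hx
        exact hxm.2
      have := hPsum x
      rw [Finset.sum_eq_single m (fun m' _ hm'ne => hz m' hm'ne) (by simp)] at this
      rw [← this]
      exact hmemP m x
    refine ⟨m, (hirrG m W hle hWstab).resolve_left hWne⟩
  -- main argument
  intro vc hvc hsum i
  -- some component is nonzero
  have hex : ∃ i₀, vc i₀ ≠ 0 := by
    by_contra hall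
    push_neg at hall
    apply hv
    rw [← hsum, Finset.sum_congr rfl (fun l _ => hall l)]
    simp
  obtain ⟨i₀, hi₀⟩ := hex
  obtain ⟨t, ht, hmap⟩ := htrans i₀ i
  -- images of summands under ρ t are summands
  have himg : ∀ l, ∃ m, Submodule.map (ρ t) (Vi l) = Vi m := by
    intro l
    apply hclass
    · obtain ⟨x, hxV, hx0⟩ := Submodule.exists_mem_ne_zero_of_ne_bot (hne l)
      intro hbot
      have : ρ t x ∈ Submodule.map (ρ t) (Vi l) := ⟨x, hxV, rfl⟩
      rw [hbot] at this
      exact hx0 (hρinj t (by simpa using (Submodule.mem_bot ℂ |>.mp this)))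
    · rintro g hg u ⟨x, hxV, rfl⟩
      refine ⟨ρ (t⁻¹ * g * t) x, hGstab l _ ?_ x hxV, ?_⟩
      · have : t⁻¹ * g * t ∈ G := Subgroup.Normal.conj_mem' ‹G.Normal› g hg t
        exact this
      · have e1 : ρ g ((ρ t) x) = ρ (g * t) x := by rw [map_mul]; rfl
        have e2 : ρ t (ρ (t⁻¹ * g * t) x) = ρ (t * (t⁻¹ * g * t)) x := by
          rw [map_mul ρ t (t⁻¹ * g * t)]; rfl
        rw [e1, e2]
        have harg : g * t = t * (t⁻¹ * g * t) := by group
        rw [harg]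
    · -- irreducibility of the image
      intro F hF hFstab
      have hmapmap : ∀ (p : Submodule ℂ Vc), Submodule.map (ρ t⁻¹) (Submodule.map (ρ t) p) = p := by
        intro p
        rw [← Submodule.map_comp]
        have : (ρ t⁻¹).comp (ρ t) = LinearMap.id := by
          ext x
          simp [hρinv t x]
        rw [this, Submodule.map_id]
      have hmapmap' : ∀ (p : Submodule ℂ Vc), Submodule.map (ρ t) (Submodule.map (ρ t⁻¹) p) = p := by
        intro p
        rw [← Submodule.map_comp]
        have : (ρ t).comp (ρ t⁻¹) = LinearMap.id := by
          ext x
          have : (ρ t * ρ t⁻¹) x = x := by rw [← map_mul, mul_inv_cancel, map_one]; rfl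
          simpa using this
        rw [this, Submodule.map_id]
      have hF' : Submodule.map (ρ t⁻¹) F ≤ Vi l := by
        have := Submodule.map_mono (f := ρ t⁻¹) hF
        rwa [hmapmap] at this
      have hF'stab : ∀ g ∈ G, ∀ u ∈ Submodule.map (ρ t⁻¹) F, ρ g u ∈ Submodule.map (ρ t⁻¹) F := by
        rintro g hg u ⟨x, hxF, rfl⟩
        refine ⟨ρ (t * g * t⁻¹) x, hFstab _ ?_ x hxF, ?_⟩
        · exact Subgroup.Normal.conj_mem ‹G.Normal› g hg t
        · have e1 : ρ g ((ρ t⁻¹) x) = ρ (g * t⁻¹) x := by rw [map_mul]; rfl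
          have e2 : ρ t⁻¹ (ρ (t * g * t⁻¹) x) = ρ (t⁻¹ * (t * g * t⁻¹)) x := by
            rw [map_mul ρ t⁻¹ (t * g * t⁻¹)]; rfl
          rw [e1, e2]
          have harg : g * t⁻¹ = t⁻¹ * (t * g * t⁻¹) := by group
          rw [harg]
      rcases hirrG l _ hF' hF'stab with h | h
      · left
        have := congrArg (Submodule.map (ρ t)) h
        rwa [hmapmap', Submodule.map_bot] at this
      · right
        have := congrArg (Submodule.map (ρ t)) h
        rwa [hmapmap'] at this
  choose σ hσ using himg
  have hσinj : Function.Injective σ := by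
    intro l l' h
    have : Submodule.map (ρ t) (Vi l) = Submodule.map (ρ t) (Vi l') := by
      rw [hσ l, hσ l', h]
    have h2 := congrArg (Submodule.map (ρ t⁻¹)) this
    rw [← Submodule.map_comp, ← Submodule.map_comp] at h2
    have hid : (ρ t⁻¹).comp (ρ t) = LinearMap.id := by
      ext x; simp [hρinv t x]
    rw [hid, Submodule.map_id, Submodule.map_id] at h2
    exact hdist l l' h2
  have hσi₀ : σ i₀ = i := hdist _ _ (by rw [← hσ i₀, hmap])
  -- compute the i-component of ρ t v two ways
  have hcomp1 : proj i (ρ t v) = ρ t (vc i₀) := by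
    have h1 : ∀ l, ρ t (vc l) ∈ Vi (σ l) := by
      intro l
      rw [← hσ l]
      exact ⟨vc l, hvc l, rfl⟩
    rw [← hsum, map_sum, map_sum]
    have h2 : ∀ l, proj i (ρ t (vc l)) = if l = i₀ then ρ t (vc i₀) else 0 := by
      intro l
      by_cases hl : l = i₀
      · subst hl
        rw [if_pos rfl, hPmem i (σ l) _ (h1 l), hσi₀, if_pos rfl]
      · rw [if_neg hl, hPmem i (σ l) _ (h1 l), if_neg]
        intro hc
        exact hl (hσinj (hc.trans hσi₀.symm))
    rw [Finset.sum_congr rfl (fun l _ => h2 l)]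
    simp
  have hcomp2 : proj i (ρ t v) = ((χ ⟨t, ht.2⟩ : ℂˣ) : ℂ) • vc i := by
    have := heig ⟨t, ht.2⟩
    rw [this, map_smul]
    congr 1
    exact hchar vc v hvc hsum i
  intro hvi
  rw [hvi, smul_zero] at hcomp2
  rw [hcomp2] at hcomp1
  exact hi₀ (hρinj t (by rw [← hcomp1, map_zero]))
end
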